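/- arXiv:2302.07110 — 6 statements merged into one kernel-verified Lean document; each statement's English description precedes it below -/
import Mathlib

section
/- Let P = v_0 v_1 ... v_l be a path in a graph G with x = v_0 and y = v_l, and let H be a component of G - V(P) having a neighbor v_i on P. If P is an x-fiber, then i < l, and moreover if 0 < i then v_l v_{i-1} is not an edge of G. Similarly, if P is a y-fiber, then 0 < i, and if i < l then v_0 v_{i+1} is not an edge of G. -/
open SimpleGraph

namespace GallaiFormal

variable {V : Type}

/-- A vertex `v` is a *Gallai vertex* of `G` if every longest path of `G` contains `v`. -/
def IsGallaiVertex (G : SimpleGraph V) (v : V) : Prop :=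
  ∀ ⦃a b : V⦄ (p : G.Walk a b), p.IsPath →
    (∀ ⦃c d : V⦄ (q : G.Walk c d), q.IsPath → q.length ≤ p.length) → v ∈ p.support

/-- `G` has no induced subgraph isomorphic to `H` (`G` is `H`-free). -/
def IsFree {W : Type} (G : SimpleGraph V) (H : SimpleGraph W) : Prop :=
  ¬ ∃ s : Set V, Nonempty (H ≃g (G.induce s))

/-- `A` is an independent set of `G`. -/
def IsIndepSet (G : SimpleGraph V) (A : Set V) : Prop :=
  A.Pairwise fun a b => ¬ G.Adj a b

/-- `H` is (the vertex set of) a connected component of `G - s`. -/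
def IsCompOutside (G : SimpleGraph V) (s : Set V) (H : Set V) : Prop :=
  H.Nonempty ∧ Disjoint H s ∧ (G.induce H).Connected ∧
    ∀ u ∈ H, ∀ v : V, G.Adj u v → v ∉ s → v ∈ H

/-- The set of attachment points of `H` on the path `p`. -/
def attachSet (G : SimpleGraph V) {x y : V} (p : G.Walk x y) (H : Set V) : Set V :=
  {w | w ∈ p.support ∧ ∃ u ∈ H, G.Adj u w}

/-- `p` is an `x`-fiber: a longest path among paths having its first endpoint as an endpoint. -/
def IsEndFiber (G : SimpleGraph V) {x y : V} (p : G.Walk x y) : Prop :=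
  p.IsPath ∧ ∀ (z : V) (q : G.Walk x z), q.IsPath → q.length ≤ p.length

/-- `p` is an `xy`-fiber: a longest path among paths with the same two endpoints. -/
def IsFiberBetween (G : SimpleGraph V) {x y : V} (p : G.Walk x y) : Prop :=
  p.IsPath ∧ ∀ q : G.Walk x y, q.IsPath → q.length ≤ p.length

/-- `p` is a longest path of `G`. -/
def IsLongestPath (G : SimpleGraph V) {x y : V} (p : G.Walk x y) : Prop :=
  p.IsPath ∧ ∀ ⦃a b : V⦄ (q : G.Walk a b), q.IsPath → q.length ≤ p.length

/-- The (index) interval `[a, b]` of positions on `p` is a maximal interval avoiding `S`;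
these intervals correspond to the components of `P - S`. -/
def IsGapInterval (G : SimpleGraph V) {x y : V} (p : G.Walk x y) (S : Set V) (a b : ℕ) : Prop :=
  a ≤ b ∧ b ≤ p.length ∧ (∀ i, a ≤ i → i ≤ b → p.getVert i ∉ S) ∧
    (a = 0 ∨ p.getVert (a - 1) ∈ S) ∧ (b = p.length ∨ p.getVert (b + 1) ∈ S)

/-- The rank of the vertex at position `j` on `p` (w.r.t. the attachment set `S`): the maximum
length of a subpath of `p` ending at position `j` and avoiding `S`. -/
noncomputable def rankAt (G : SimpleGraph V) {x y : V} (p : G.Walk x y) (S : Set V) (j : ℕ) : ℕ :=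
  sSup {r : ℕ | ∃ a : ℕ, a + r = j ∧ ∀ i, a ≤ i → i ≤ j → p.getVert i ∉ S}

/-- `G` is `k`-connected. -/
def IsKConnected [Fintype V] (k : ℕ) (G : SimpleGraph V) : Prop :=
  k < Fintype.card V ∧ ∀ s : Set V, s.ncard < k → (G.induce sᶜ).Connected

/-- `B` is (the vertex set of) a block of `G`: a maximal connected subgraph without cut-vertices. -/
def IsBlock (G : SimpleGraph V) (B : Set V) : Prop :=
  (G.induce B).Connected ∧ (∀ v ∈ B, (G.induce (B \ {v})).Preconnected) ∧
    ∀ B' : Set V, B ⊆ B' → (G.induce B').Connected →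
      (∀ v ∈ B', (G.induce (B' \ {v})).Preconnected) → B' = B

/-- `B` is a special block of `G`: a block such that every longest path contains an edge of `B`. -/
def IsSpecialBlock (G : SimpleGraph V) (B : Set V) : Prop :=
  IsBlock G B ∧ ∀ ⦃a b : V⦄ (p : G.Walk a b), IsLongestPath G p →
    ∃ i < p.length, p.getVert i ∈ B ∧ p.getVert (i + 1) ∈ B

/-!
Let `u ∉ V(P)` be adjacent to `v_i` and `P` an `x`-fiber. Then `v_i ≠ y`, since otherwise
appending `u` lengthens `P`; and for `0 < i`, `y v_{i-1}` is no edge, since rotating `P` along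
it gives a path from `x` on the same vertices ending at `v_i`, which again extends to `u`. The `y`-fiber case is
the `x`-fiber case for the reversed path.
-/

open SimpleGraph.Walk

section Fibers

variable {G : SimpleGraph V}

/-- Pósa rotation: `v_0 … v_{i-1} v_l v_{l-1} … v_i`. -/
theorem _root_.SimpleGraph.Walk.exists_rotation {x y : V} (p : G.Walk x y) {i : ℕ} (hi0 : 0 < i)
    (hi : i ≤ p.length) (hy : G.Adj y (p.getVert (i - 1))) :
    ∃ q : G.Walk x (p.getVert i), q.support.Perm p.support := by
  refine ⟨(p.take (i - 1)).append (cons hy.symm (p.drop i).reverse), ?_⟩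
  rw [support_append, support_cons, List.tail_cons, support_reverse, support_take,
    Nat.sub_add_cancel hi0, drop_support_eq_support_drop_min, min_eq_left hi]
  exact ((List.reverse_perm _).append_left _).trans (List.Perm.of_eq (List.take_append_drop _ _))

theorem IsEndFiber.not_adj_of_support_perm {x y w u : V} {p : G.Walk x y} (hf : IsEndFiber G p)
    {q : G.Walk x w} (hq : q.support.Perm p.support) (hu : u ∉ p.support) : ¬ G.Adj w u := by
  intro hwu
  have hqp : q.IsPath := (isPath_def q).mpr (hq.nodup_iff.mpr hf.1.support_nodup)
  have hlong := hf.2 u (q.concat hwu) (hqp.concat (mt hq.mem_iff.mp hu) hwu)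
  have hlen := hq.length_eq
  rw [length_support, length_support] at hlen
  rw [length_concat] at hlong
  omega

theorem IsEndFiber.lt_length_and_not_adj {x y u : V} {p : G.Walk x y} (hf : IsEndFiber G p)
    (hu : u ∉ p.support) {i : ℕ} (hui : G.Adj u (p.getVert i)) :
    i < p.length ∧ (0 < i → ¬ G.Adj y (p.getVert (i - 1))) := by
  have hi : i < p.length := by
    by_contra! hle
    rw [p.getVert_of_length_le hle] at hui
    exact hf.not_adj_of_support_perm (List.Perm.refl _) hu hui.symm
  refine ⟨hi, fun hi0 hy => ?_⟩
  obtain ⟨q, hq⟩ := p.exists_rotation hi0 hi.le hy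
  exact hf.not_adj_of_support_perm hq hu hui.symm

theorem isEndFiber_reverse {x y : V} {p : G.Walk x y} (hp : p.IsPath)
    (hmax : ∀ (z : V) (q : G.Walk z y), q.IsPath → q.length ≤ p.length) :
    IsEndFiber G p.reverse := by
  refine ⟨hp.reverse, fun z q hq => ?_⟩
  simpa using hmax z q.reverse hq.reverse

end Fibers

/-- Let `p` be an `xy`-path and `H` a component of `G - V(p)` with a neighbor
at position `i` of `p`.  If `p` is an `x`-fiber then `i < l`, and if `0 < i` then
`y v_{i-1} ∉ E(G)`; if `p` is a `y`-fiber then `0 < i`, and if `i < l` then `x v_{i+1} ∉ E(G)`. -/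
theorem stmt3 (G : SimpleGraph V) {x y : V} (p : G.Walk x y) (H : Set V)
    (hH : IsCompOutside G {v | v ∈ p.support} H)
    (i : ℕ) (hi : i ≤ p.length) (hatt : ∃ u ∈ H, G.Adj u (p.getVert i)) :
    (IsEndFiber G p → i < p.length ∧ (0 < i → ¬ G.Adj y (p.getVert (i - 1)))) ∧
    ((p.IsPath ∧ ∀ (z : V) (q : G.Walk z y), q.IsPath → q.length ≤ p.length) →
      0 < i ∧ (i < p.length → ¬ G.Adj x (p.getVert (i + 1)))) := by
  obtain ⟨u, huH, hui⟩ := hatt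
  have hu : u ∉ p.support := Set.disjoint_left.mp hH.2.1 huH
  refine ⟨fun hf => hf.lt_length_and_not_adj hu hui, fun ⟨hp, hmax⟩ => ?_⟩
  have hrev := (isEndFiber_reverse hp hmax).lt_length_and_not_adj (i := p.length - i)
    (by simpa using hu) (by rwa [getVert_reverse, Nat.sub_sub_self hi])
  rw [length_reverse] at hrev
  refine ⟨by omega, fun hil hadj => hrev.2 (by omega) ?_⟩
  rwa [getVert_reverse, show p.length - (p.length - i - 1) = i + 1 by omega]

end GallaiFormal
end

section
/- Let P be a path in a graph G with endpoints x and y, and let H be a component of G - V(P) with attachment points s and s', where s appears before s' when traversing P from x to y. Then: (1) if s and s' are consecutive on P, then G contains a path with endpoints x and y that is longer than P; (2) if s and s' are not consecutive along P, the vertex w immediately follows s and the vertex w' immediately follows s' along P, and ww' is an edge of G, then G contains a path with endpoints x and y that is longer than P; (3) if s and s' are not consecutive along P, the vertex w immediately precedes s and the vertex w' immediately precedes s' along P, and ww' is an edge of G, then G contains a path with endpoints x and y that is longer than P. -/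
open SimpleGraph

namespace GallaiFormal

variable {V : Type}

/-!
Let `u, u' ∈ H` be neighbours of `s, s'` and `r` a `u`–`u'` path inside `H`. In each case there is
an `x`–`y` walk that visits the vertices of `P` and of `r` each exactly once: (1) replace the edge
`ss'` by `s u ⋯ u' s'`; (2) take `x ⋯ s u ⋯ u' s' ⋯ w w' ⋯ y`, traversing `P` backwards from `s'`
to `w`; (3) take `x ⋯ w w' ⋯ s u ⋯ u' s' ⋯ y`, traversing `P` backwards from `w'` to `s`.
As `P` and `r` are disjoint paths, a walk whose vertex list is a permutation of `V(P) ++ V(r)` is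
a path, of length `|P| + |r| + 1`.
-/

lemma _root_.List.take_append_drop_take_append_drop {α : Type*} (l : List α) {a b : ℕ}
    (hab : a ≤ b) : l.take a ++ (l.take b).drop a ++ l.drop b = l := by
  calc l.take a ++ (l.take b).drop a ++ l.drop b
      = (l.take b).take a ++ (l.take b).drop a ++ l.drop b := by
        rw [List.take_take, min_eq_left hab]
    _ = l := by rw [List.take_append_drop, List.take_append_drop]

section Reroute

variable {G : SimpleGraph V}

def _root_.SimpleGraph.Walk.segment {u v : V} (p : G.Walk u v) {a b : ℕ} (hab : a ≤ b) :
    G.Walk (p.getVert a) (p.getVert b) :=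
  ((p.take b).drop a).copy (by rw [Walk.take_getVert, min_eq_right hab]) rfl

lemma _root_.SimpleGraph.Walk.support_segment {u v : V} (p : G.Walk u v) {a b : ℕ} (hab : a ≤ b)
    (hb : b ≤ p.length) : (p.segment hab).support = (p.support.take (b + 1)).drop a := by
  simp [Walk.segment, Walk.support_take, Walk.take_length, min_eq_left hb, min_eq_left hab]

lemma _root_.SimpleGraph.Walk.IsPath.of_support_perm {a b c d x y : V} {p : G.Walk a b}
    {r : G.Walk c d} {q : G.Walk x y} (hp : p.IsPath) (hr : r.IsPath)
    (hpr : ∀ v ∈ r.support, v ∉ p.support) (hq : q.support.Perm (p.support ++ r.support)) :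
    q.IsPath ∧ q.length = p.length + r.length + 1 := by
  refine ⟨?_, ?_⟩
  · rw [Walk.isPath_def, hq.nodup_iff, List.nodup_append]
    exact ⟨hp.support_nodup, hr.support_nodup, fun v hv w hw hvw => hpr w hw (hvw ▸ hv)⟩
  · have := hq.length_eq
    simp only [List.length_append, Walk.length_support] at this
    omega

lemma exists_isPath_of_induce_connected {H : Set V} (hconn : (G.induce H).Connected) {u u' : V}
    (hu : u ∈ H) (hu' : u' ∈ H) :
    ∃ r : G.Walk u u', r.IsPath ∧ ∀ v ∈ r.support, v ∈ H := by
  classical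
  obtain ⟨w⟩ := hconn.preconnected ⟨u, hu⟩ ⟨u', hu'⟩
  refine ⟨w.bypass.map (Embedding.induce (G := G) H).toHom,
    Walk.IsPath.map (Embedding.induce (G := G) H).injective w.bypass_isPath, ?_⟩
  intro v hv
  obtain ⟨v', -, rfl⟩ := List.mem_map.mp (Walk.support_map _ w.bypass ▸ hv)
  exact v'.2

lemma exists_longer_path_of_reroute {x y u u' : V} {p : G.Walk x y} (hp : p.IsPath) {H : Set V}
    (hconn : (G.induce H).Connected) (hHp : ∀ v ∈ H, v ∉ p.support) (hu : u ∈ H) (hu' : u' ∈ H)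
    (hq : ∀ r : G.Walk u u', ∃ q : G.Walk x y, q.support.Perm (p.support ++ r.support)) :
    ∃ q : G.Walk x y, q.IsPath ∧ p.length < q.length := by
  obtain ⟨r, hr, hrH⟩ := exists_isPath_of_induce_connected hconn hu hu'
  obtain ⟨q, hqr⟩ := hq r
  obtain ⟨hq, hlen⟩ := hp.of_support_perm hr (fun v hv => hHp v (hrH v hv)) hqr
  exact ⟨q, hq, by omega⟩

lemma exists_support_perm_detour_edge {x y u u' : V} (p : G.Walk x y) {i : ℕ} (hi : i < p.length)
    (r : G.Walk u u') (hs : G.Adj (p.getVert i) u) (hs' : G.Adj u' (p.getVert (i + 1))) :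
    ∃ q : G.Walk x y, q.support.Perm (p.support ++ r.support) := by
  classical
  refine ⟨(p.take i).append (.cons hs (r.append (.cons hs' (p.drop (i + 1))))), ?_⟩
  simp only [Walk.support_append, Walk.support_cons, List.tail_cons, Walk.support_take,
    Walk.drop_support_eq_support_drop_min, min_eq_left (show i + 1 ≤ p.length from hi)]
  conv_rhs => rw [← p.support.take_append_drop (i + 1)]
  exact List.perm_iff_count.2 fun v => by simp only [List.count_append]; omega

lemma exists_support_perm_detour_succ {x y u u' : V} (p : G.Walk x y) {i j : ℕ} (hij : i < j)
    (hj : j < p.length) (r : G.Walk u u') (hs : G.Adj (p.getVert i) u)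
    (hs' : G.Adj u' (p.getVert j)) (hw : G.Adj (p.getVert (i + 1)) (p.getVert (j + 1))) :
    ∃ q : G.Walk x y, q.support.Perm (p.support ++ r.support) := by
  classical
  refine ⟨(p.take i).append (.cons hs (r.append (.cons hs'
    ((p.segment (a := i + 1) hij).reverse.append (.cons hw (p.drop (j + 1))))))), ?_⟩
  simp only [Walk.support_append, Walk.support_cons, List.tail_cons, Walk.support_take,
    Walk.support_reverse, p.support_segment (a := i + 1) hij hj.le,
    Walk.drop_support_eq_support_drop_min, min_eq_left (show j + 1 ≤ p.length from hj)]
  conv_rhs => rw [← p.support.take_append_drop_take_append_drop (by omega : i + 1 ≤ j + 1)]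
  exact List.perm_iff_count.2 fun v => by
    simp only [List.count_append, List.count_reverse]; omega

lemma exists_support_perm_detour_pred {x y u u' : V} (p : G.Walk x y) {i j : ℕ} (hi : 0 < i)
    (hij : i < j) (hj : j ≤ p.length) (r : G.Walk u u') (hs : G.Adj (p.getVert i) u)
    (hs' : G.Adj u' (p.getVert j)) (hw : G.Adj (p.getVert (i - 1)) (p.getVert (j - 1))) :
    ∃ q : G.Walk x y, q.support.Perm (p.support ++ r.support) := by
  classical
  have hij' : i ≤ j - 1 := by omega
  refine ⟨(p.take (i - 1)).append (.cons hw ((p.segment hij').reverse.append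
    (.cons hs (r.append (.cons hs' (p.drop j)))))), ?_⟩
  simp only [Walk.support_append, Walk.support_cons, List.tail_cons, Walk.support_take,
    Walk.support_reverse, p.support_segment hij' (by omega), Walk.drop_support_eq_support_drop_min,
    min_eq_left hj, Nat.sub_add_cancel hi, Nat.sub_add_cancel (hi.trans hij)]
  conv_rhs => rw [← p.support.take_append_drop_take_append_drop hij.le]
  exact List.perm_iff_count.2 fun v => by
    simp only [List.count_append, List.count_reverse]; omega

end Reroute

theorem stmt4_general (G : SimpleGraph V) {x y : V} (p : G.Walk x y) (hp : p.IsPath)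
    (H : Set V) (hH : IsCompOutside G {v | v ∈ p.support} H)
    (i j : ℕ) (hj : j ≤ p.length)
    (hsi : ∃ u ∈ H, G.Adj u (p.getVert i)) (hsj : ∃ u ∈ H, G.Adj u (p.getVert j)) :
    (j = i + 1 → ∃ q : G.Walk x y, q.IsPath ∧ p.length < q.length) ∧
    (i + 1 < j → j < p.length → G.Adj (p.getVert (i + 1)) (p.getVert (j + 1)) →
      ∃ q : G.Walk x y, q.IsPath ∧ p.length < q.length) ∧
    (i + 1 < j → 0 < i → G.Adj (p.getVert (i - 1)) (p.getVert (j - 1)) →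
      ∃ q : G.Walk x y, q.IsPath ∧ p.length < q.length) := by
  obtain ⟨u, hu, hus⟩ := hsi
  obtain ⟨u', hu', hu's'⟩ := hsj
  obtain ⟨-, hdisj, hconn, -⟩ := hH
  have reroute := exists_longer_path_of_reroute hp hconn
    (fun v hv => Set.disjoint_left.mp hdisj hv) hu hu'
  refine ⟨fun hsucc => reroute fun r => ?_, fun hij hjp hw => reroute fun r => ?_,
    fun hij hi hw => reroute fun r => ?_⟩
  · subst hsucc
    exact exists_support_perm_detour_edge p hj r hus.symm hu's'
  · exact exists_support_perm_detour_succ p (by omega) hjp r hus.symm hu's' hw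
  · exact exists_support_perm_detour_pred p hi (by omega) hj r hus.symm hu's' hw

/-- attachment points `s = p.getVert i` and `s' = p.getVert j` of a component `H`
of `G - V(p)`.  (1) If they are consecutive on `p`, (2) if their successors are adjacent, or
(3) if their predecessors are adjacent, then there is a longer `xy`-path. -/
theorem stmt4 (G : SimpleGraph V) {x y : V} (p : G.Walk x y) (hp : p.IsPath)
    (H : Set V) (hH : IsCompOutside G {v | v ∈ p.support} H)
    (i j : ℕ) (hij : i < j) (hj : j ≤ p.length)
    (hsi : ∃ u ∈ H, G.Adj u (p.getVert i)) (hsj : ∃ u ∈ H, G.Adj u (p.getVert j)) :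
    (j = i + 1 → ∃ q : G.Walk x y, q.IsPath ∧ p.length < q.length) ∧
    (i + 1 < j → j < p.length → G.Adj (p.getVert (i + 1)) (p.getVert (j + 1)) →
      ∃ q : G.Walk x y, q.IsPath ∧ p.length < q.length) ∧
    (i + 1 < j → 0 < i → G.Adj (p.getVert (i - 1)) (p.getVert (j - 1)) →
      ∃ q : G.Walk x y, q.IsPath ∧ p.length < q.length) :=
  stmt4_general G p hp H hH i j hj hsi hsj

end GallaiFormal
end

section
/- Let P be a path in a graph G with endpoints x and y, let H be a component of G - V(P), and let k be the number of attachment points of H on P. Then there is an independent set A of G with A ⊆ V(P), such that no edge of G joins a vertex of A and a vertex of H, and: (1) if P is an xy-fiber, then A ⊆ V(P) - {x,y} and |A| ≥ k - 1; (2) if P is an x-fiber, then A ⊆ V(P) - {x} and |A| ≥ k; (3) if P is a longest path of G, then |A| ≥ k + 1. -/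
open SimpleGraph

/-!
Write `p = v_0 ⋯ v_n`; the independent sets are built from the successors `v_{i+1}` of the
attachment points `v_i ≠ y`. If `p` is an `xy`-fiber, no such successor has a neighbour in `H`
(a detour through `H` could replace the edge `v_i v_{i+1}`), and no two are adjacent: an edge
`v_{i+1} v_{j+1}` with `i < j` would give the longer `xy`-path
`v_0 ⋯ v_i, H, v_j ⋯ v_{i+1} v_{j+1} ⋯ v_n`.
Only `y` itself may have to be discarded. For an `x`-fiber, `y` is not an attachment point, so
every attachment point has a successor. For a longest path, `x` may be added as well: it has no
neighbour in `H`, and an edge `x v_{i+1}` would, by a Pósa rotation, make the attachment point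
`v_i` an end of a longest path.
-/

namespace SimpleGraph

variable {V : Type*} {G : SimpleGraph V}

theorem Preconnected.exists_isPath_of_induce {s : Set V} (hs : (G.induce s).Preconnected)
    {a b : V} (ha : a ∈ s) (hb : b ∈ s) :
    ∃ c : G.Walk a b, c.IsPath ∧ ∀ w ∈ c.support, w ∈ s := by
  classical
  obtain ⟨c⟩ := hs ⟨a, ha⟩ ⟨b, hb⟩
  have hcs : ∀ w ∈ (c.bypass.map (Embedding.induce s).toHom).support, w ∈ s := by
    rw [Walk.support_map, List.forall_mem_map]
    exact fun w _ => w.2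
  exact ⟨_, c.bypass_isPath.map Subtype.val_injective, hcs⟩

namespace Walk

variable {u v w x : V}

theorem IsPath.append_cons {p : G.Walk u v} {q : G.Walk w x} (hp : p.IsPath) (hq : q.IsPath)
    (h : G.Adj v w) (hpq : p.support.Disjoint q.support) : (p.append (cons h q)).IsPath := by
  rw [isPath_def, support_append, support_cons, List.tail_cons]
  exact hp.support_nodup.append hq.support_nodup hpq

theorem IsPath.disjoint_support_take_drop {p : G.Walk u v} (hp : p.IsPath) {m n : ℕ}
    (hmn : m < n) (hn : n ≤ p.length) : (p.take m).support.Disjoint (p.drop n).support := by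
  rw [support_take, drop_support_eq_support_drop_min, min_eq_left hn]
  exact List.disjoint_take_drop hp.support_nodup hmn

theorem IsPath.exists_rotation {p : G.Walk u v} (hp : p.IsPath) {m : ℕ} (hm : m < p.length)
    (h : G.Adj u (p.getVert (m + 1))) :
    ∃ q : G.Walk (p.getVert m) v, q.IsPath ∧ q.length = p.length ∧ q.support ⊆ p.support := by
  refine ⟨(p.take m).reverse.append (cons h (p.drop (m + 1))), ?_, ?_, ?_⟩
  · refine (hp.take m).reverse.append_cons (hp.drop (m + 1)) h ?_
    rw [support_reverse]
    exact List.disjoint_reverse_left.2 (hp.disjoint_support_take_drop (by omega) hm)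
  · simp only [length_append, length_reverse, take_length, length_cons, drop_length]
    omega
  · rw [support_append, support_reverse, support_cons, List.tail_cons]
    exact List.append_subset.2 ⟨fun a ha => (p.isSubwalk_take m).support_subset
      (List.mem_reverse.1 ha), (p.isSubwalk_drop (m + 1)).support_subset⟩

theorem IsPath.exists_join_through {s : Set V} {p : G.Walk x u} {q : G.Walk v w}
    (hp : p.IsPath) (hq : q.IsPath) (hpq : p.support.Disjoint q.support)
    (hs : (G.induce s).Preconnected) (hps : ∀ a ∈ p.support, a ∉ s)
    (hqs : ∀ a ∈ q.support, a ∉ s)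
    {a b : V} (ha : a ∈ s) (hb : b ∈ s) (hua : G.Adj u a) (hbv : G.Adj b v) :
    ∃ r : G.Walk x w, r.IsPath ∧ p.length + q.length + 2 ≤ r.length := by
  obtain ⟨c, hc, hcs⟩ := hs.exists_isPath_of_induce ha hb
  have hcq : c.support.Disjoint q.support := fun z hzc hzq => hqs z hzq (hcs z hzc)
  refine ⟨p.append (cons hua (c.append (cons hbv q))), hp.append_cons (hc.append_cons hq hbv hcq)
    hua ?_, ?_⟩
  · rw [support_append, support_cons, List.tail_cons]
    exact List.disjoint_append_right.2 ⟨fun z hzp hzc => hps z hzp (hcs z hzc), hpq⟩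
  · simp only [length_append, length_cons]
    omega

end Walk

end SimpleGraph

namespace GallaiFormal

variable {V : Type}

def attachSucc (G : SimpleGraph V) {x y : V} (p : G.Walk x y) (H : Set V) : Set V :=
  (fun i => p.getVert (i + 1)) '' {i | i < p.length ∧ p.getVert i ∈ attachSet G p H}

section Fibers

variable {G : SimpleGraph V} {x y : V} {p : G.Walk x y} {H : Set V}

theorem IsLongestPath.isEndFiber (h : IsLongestPath G p) : IsEndFiber G p :=
  ⟨h.1, fun _ q hq => h.2 q hq⟩

theorem IsEndFiber.isFiberBetween (h : IsEndFiber G p) : IsFiberBetween G p :=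
  ⟨h.1, fun q hq => h.2 y q hq⟩

theorem IsEndFiber.not_adj_end (h : IsEndFiber G p) {u : V} (hu : u ∉ p.support) :
    ¬ G.Adj y u :=
  fun hadj => by simpa using h.2 u _ (h.1.concat hu hadj)

theorem IsLongestPath.not_adj_start (h : IsLongestPath G p) {u : V} (hu : u ∉ p.support) :
    ¬ G.Adj u x :=
  fun hadj => by simpa using h.2 _ (h.1.cons hu (h := hadj))

theorem IsFiberBetween.not_adj_succ_of_mem_attachSet (hf : IsFiberBetween G p)
    (hH : (G.induce H).Preconnected) (hHp : Disjoint H {v | v ∈ p.support}) {i : ℕ}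
    (hi : i < p.length) (hS : p.getVert i ∈ attachSet G p H) {u : V} (hu : u ∈ H) :
    ¬ G.Adj (p.getVert (i + 1)) u := by
  intro hadj
  obtain ⟨-, a, ha, hai⟩ := hS
  have hoff : ∀ v ∈ p.support, v ∉ H := fun v hv => Set.disjoint_right.1 hHp hv
  obtain ⟨r, hr, hlen⟩ := (hf.1.take i).exists_join_through (hf.1.drop (i + 1))
    (hf.1.disjoint_support_take_drop (Nat.lt_succ_self i) hi) hH
    (fun v hv => hoff v ((p.isSubwalk_take i).support_subset hv))
    (fun v hv => hoff v ((p.isSubwalk_drop (i + 1)).support_subset hv)) ha hu hai.symm hadj.symm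
  have := hf.2 r hr
  simp only [Walk.take_length, Walk.drop_length] at hlen
  omega

theorem IsFiberBetween.not_adj_succ_succ (hf : IsFiberBetween G p)
    (hH : (G.induce H).Preconnected) (hHp : Disjoint H {v | v ∈ p.support}) {i j : ℕ}
    (hij : i < j) (hj : j < p.length) (hSi : p.getVert i ∈ attachSet G p H)
    (hSj : p.getVert j ∈ attachSet G p H) :
    ¬ G.Adj (p.getVert (i + 1)) (p.getVert (j + 1)) := by
  intro hadj
  obtain ⟨-, a, ha, hai⟩ := hSi
  obtain ⟨-, b, hb, hbj⟩ := hSj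
  have hoff : ∀ v ∈ p.support, v ∉ H := fun v hv => Set.disjoint_right.1 hHp hv
  -- Rotating the tail `v_{i+1} ⋯ v_n` along `v_{i+1} v_{j+1}` gives `v_j ⋯ v_{i+1} v_{j+1} ⋯ v_n`.
  have hrot : G.Adj (p.getVert (i + 1)) ((p.drop (i + 1)).getVert (j - (i + 1) + 1)) := by
    rwa [Walk.drop_getVert, show i + 1 + (j - (i + 1) + 1) = j + 1 by omega]
  obtain ⟨q, hq, hqlen, hqsupp⟩ :=
    (hf.1.drop (i + 1)).exists_rotation (by simp only [Walk.drop_length]; omega) hrot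
  have hbq : G.Adj b ((p.drop (i + 1)).getVert (j - (i + 1))) := by
    rwa [Walk.drop_getVert, show i + 1 + (j - (i + 1)) = j by omega]
  obtain ⟨r, hr, hlen⟩ := (hf.1.take i).exists_join_through hq
    (List.disjoint_of_subset_right hqsupp
      (hf.1.disjoint_support_take_drop (Nat.lt_succ_self i) (by omega))) hH
    (fun v hv => hoff v ((p.isSubwalk_take i).support_subset hv))
    (fun v hv => hoff v ((p.isSubwalk_drop (i + 1)).support_subset (hqsupp hv)))
    ha hb hai.symm hbq
  have := hf.2 r hr
  simp only [Walk.take_length, hqlen, Walk.drop_length] at hlen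
  omega

theorem IsLongestPath.not_adj_start_succ (h : IsLongestPath G p)
    (hHp : Disjoint H {v | v ∈ p.support}) {i : ℕ} (hi : i < p.length)
    (hS : p.getVert i ∈ attachSet G p H) : ¬ G.Adj x (p.getVert (i + 1)) := by
  intro hadj
  obtain ⟨-, u, hu, hui⟩ := hS
  obtain ⟨q, hq, hqlen, hqsupp⟩ := h.1.exists_rotation hi hadj
  have hqlong : IsLongestPath G q := ⟨hq, fun _ _ r hr => hqlen ▸ h.2 r hr⟩
  exact hqlong.not_adj_start (fun huq => Set.disjoint_left.1 hHp hu (hqsupp huq)) hui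

theorem attachSucc_subset_support : attachSucc G p H ⊆ {v | v ∈ p.support} := by
  rintro _ ⟨i, -, rfl⟩
  exact p.getVert_mem_support (i + 1)

theorem start_notMem_attachSucc (hp : p.IsPath) : x ∉ attachSucc G p H := by
  rintro ⟨i, ⟨hi, -⟩, hix⟩
  have := (hp.getVert_eq_start_iff (by omega : i + 1 ≤ p.length)).1 hix
  omega

theorem ncard_attachSet_sdiff_end_le (hp : p.IsPath) :
    (attachSet G p H \ {y}).ncard ≤ (attachSucc G p H).ncard := by
  set I := {i | i < p.length ∧ p.getVert i ∈ attachSet G p H}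
  have hI : I.Finite := (Set.finite_Iio p.length).subset fun i hi => hi.1
  have hsub : attachSet G p H \ {y} ⊆ p.getVert '' I := by
    rintro v ⟨hvS, hvy⟩
    obtain ⟨i, rfl, hi⟩ := Walk.mem_support_iff_exists_getVert.1 hvS.1
    refine ⟨i, ⟨lt_of_le_of_ne hi ?_, hvS⟩, rfl⟩
    rintro rfl
    exact hvy p.getVert_length
  have hinj : Set.InjOn (fun i => p.getVert (i + 1)) I := fun i hi j hj h =>
    Nat.succ_injective (hp.getVert_injOn (Nat.succ_le_of_lt hi.1) (Nat.succ_le_of_lt hj.1) h)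
  calc (attachSet G p H \ {y}).ncard
      ≤ (p.getVert '' I).ncard := Set.ncard_le_ncard hsub (hI.image _)
    _ ≤ I.ncard := Set.ncard_image_le hI
    _ = (attachSucc G p H).ncard := hinj.ncard_image.symm

theorem ncard_attachSet_le_ncard_attachSucc_add_one (hp : p.IsPath) :
    (attachSet G p H).ncard ≤ (attachSucc G p H).ncard + 1 :=
  (Set.ncard_le_ncard_sdiff_add_ncard _ {y}).trans
    (by simpa using ncard_attachSet_sdiff_end_le hp)

theorem ncard_attachSet_le_ncard_attachSucc (hp : p.IsPath) (hy : y ∉ attachSet G p H) :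
    (attachSet G p H).ncard ≤ (attachSucc G p H).ncard := by
  have := ncard_attachSet_sdiff_end_le hp (H := H)
  rwa [Set.sdiff_singleton_eq_self hy] at this

theorem IsFiberBetween.not_adj_of_mem_attachSucc (hf : IsFiberBetween G p)
    (hH : (G.induce H).Preconnected) (hHp : Disjoint H {v | v ∈ p.support}) {a : V}
    (ha : a ∈ attachSucc G p H) {u : V} (hu : u ∈ H) : ¬ G.Adj a u := by
  obtain ⟨i, ⟨hi, hS⟩, rfl⟩ := ha
  exact hf.not_adj_succ_of_mem_attachSet hH hHp hi hS hu

theorem IsFiberBetween.isIndepSet_attachSucc (hf : IsFiberBetween G p)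
    (hH : (G.induce H).Preconnected) (hHp : Disjoint H {v | v ∈ p.support}) :
    IsIndepSet G (attachSucc G p H) := by
  rintro _ ⟨i, ⟨hi, hSi⟩, rfl⟩ _ ⟨j, ⟨hj, hSj⟩, rfl⟩ hne
  rcases lt_trichotomy i j with hij | rfl | hji
  · exact hf.not_adj_succ_succ hH hHp hij hj hSi hSj
  · exact absurd rfl hne
  · exact fun h => hf.not_adj_succ_succ hH hHp hji hi hSj hSi h.symm

theorem IsEndFiber.end_notMem_attachSet (hf : IsEndFiber G p)
    (hHp : Disjoint H {v | v ∈ p.support}) : y ∉ attachSet G p H :=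
  fun ⟨_, _, hu, huy⟩ => hf.not_adj_end (Set.disjoint_left.1 hHp hu) huy.symm

theorem IsFiberBetween.exists_isIndepSet (hf : IsFiberBetween G p)
    (hH : (G.induce H).Preconnected) (hHp : Disjoint H {v | v ∈ p.support}) :
    ∃ A : Set V, IsIndepSet G A ∧ A ⊆ {v | v ∈ p.support} \ {x, y} ∧
      (∀ a ∈ A, ∀ u ∈ H, ¬ G.Adj a u) ∧ (attachSet G p H).ncard - 1 ≤ A.ncard := by
  refine ⟨attachSucc G p H \ {y}, Set.Pairwise.mono Set.sdiff_subset
    (hf.isIndepSet_attachSucc hH hHp), ?_,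
    fun a ha u hu => hf.not_adj_of_mem_attachSucc hH hHp ha.1 hu, ?_⟩
  · rintro a ⟨ha, hay⟩
    refine ⟨attachSucc_subset_support ha, ?_⟩
    rintro (rfl | rfl)
    · exact start_notMem_attachSucc hf.1 ha
    · exact hay rfl
  · by_cases hy : y ∈ attachSet G p H
    · have hyA : y ∉ attachSucc G p H := by
        obtain ⟨-, u, hu, huy⟩ := hy
        exact fun hyA => hf.not_adj_of_mem_attachSucc hH hHp hyA hu huy.symm
      rw [Set.sdiff_singleton_eq_self hyA]
      have := ncard_attachSet_le_ncard_attachSucc_add_one hf.1 (H := H)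
      omega
    · exact (Nat.sub_le_sub_right (ncard_attachSet_le_ncard_attachSucc hf.1 hy) 1).trans
        (Set.pred_ncard_le_ncard_sdiff_singleton _ _)

theorem IsEndFiber.exists_isIndepSet (hf : IsEndFiber G p)
    (hH : (G.induce H).Preconnected) (hHp : Disjoint H {v | v ∈ p.support}) :
    ∃ A : Set V, IsIndepSet G A ∧ A ⊆ {v | v ∈ p.support} \ {x} ∧
      (∀ a ∈ A, ∀ u ∈ H, ¬ G.Adj a u) ∧ (attachSet G p H).ncard ≤ A.ncard :=
  ⟨attachSucc G p H, hf.isFiberBetween.isIndepSet_attachSucc hH hHp,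
    fun _ ha => ⟨attachSucc_subset_support ha,
      fun hax => start_notMem_attachSucc hf.1 (hax ▸ ha)⟩,
    fun _ ha _ hu => hf.isFiberBetween.not_adj_of_mem_attachSucc hH hHp ha hu,
    ncard_attachSet_le_ncard_attachSucc hf.1 (hf.end_notMem_attachSet hHp)⟩

theorem IsLongestPath.exists_isIndepSet (hf : IsLongestPath G p)
    (hH : (G.induce H).Preconnected) (hHp : Disjoint H {v | v ∈ p.support}) :
    ∃ A : Set V, IsIndepSet G A ∧ A ⊆ {v | v ∈ p.support} ∧
      (∀ a ∈ A, ∀ u ∈ H, ¬ G.Adj a u) ∧ (attachSet G p H).ncard + 1 ≤ A.ncard := by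
  have hfib := hf.isEndFiber.isFiberBetween
  have hx := start_notMem_attachSucc hf.1 (H := H)
  refine ⟨insert x (attachSucc G p H), ?_, ?_, ?_, ?_⟩
  · refine (hfib.isIndepSet_attachSucc hH hHp).insert_of_notMem hx ?_
    rintro _ ⟨i, ⟨hi, hS⟩, rfl⟩
    have := hf.not_adj_start_succ hHp hi hS
    exact ⟨this, fun h => this h.symm⟩
  · exact Set.insert_subset p.start_mem_support attachSucc_subset_support
  · rintro a (rfl | ha) u hu
    · exact fun hau => hf.not_adj_start (Set.disjoint_left.1 hHp hu) hau.symm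
    · exact hfib.not_adj_of_mem_attachSucc hH hHp ha hu
  · rw [Set.ncard_insert_of_notMem hx (p.support.finite_toSet.subset attachSucc_subset_support)]
    exact Nat.succ_le_succ
      (ncard_attachSet_le_ncard_attachSucc hf.1 (hf.isEndFiber.end_notMem_attachSet hHp))

end Fibers

theorem stmt5_general (G : SimpleGraph V) {x y : V} (p : G.Walk x y)
    (H : Set V) (hH : IsCompOutside G {v | v ∈ p.support} H)
    (k : ℕ) (hk : k = (attachSet G p H).ncard) :
    (IsFiberBetween G p → ∃ A : Set V, IsIndepSet G A ∧
      A ⊆ {v | v ∈ p.support} \ {x, y} ∧ (∀ a ∈ A, ∀ u ∈ H, ¬ G.Adj a u) ∧ k - 1 ≤ A.ncard) ∧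
    (IsEndFiber G p → ∃ A : Set V, IsIndepSet G A ∧
      A ⊆ {v | v ∈ p.support} \ {x} ∧ (∀ a ∈ A, ∀ u ∈ H, ¬ G.Adj a u) ∧ k ≤ A.ncard) ∧
    (IsLongestPath G p → ∃ A : Set V, IsIndepSet G A ∧
      A ⊆ {v | v ∈ p.support} ∧ (∀ a ∈ A, ∀ u ∈ H, ¬ G.Adj a u) ∧ k + 1 ≤ A.ncard) := by
  obtain ⟨-, hHp, hHc, -⟩ := hH
  subst hk
  exact ⟨fun hf => hf.exists_isIndepSet hHc.preconnected hHp,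
    fun hf => hf.exists_isIndepSet hHc.preconnected hHp,
    fun hf => hf.exists_isIndepSet hHc.preconnected hHp⟩

/-- independent sets of non-attachment points next to the `k` attachment points
of a component `H` of `G - V(p)`, with no edges to `H`: of size `≥ k-1` avoiding both ends if
`p` is an `xy`-fiber, `≥ k` avoiding `x` if `p` is an `x`-fiber, `≥ k+1` if `p` is longest. -/
theorem stmt5 (G : SimpleGraph V) {x y : V} (p : G.Walk x y) (hp : p.IsPath)
    (H : Set V) (hH : IsCompOutside G {v | v ∈ p.support} H)
    (k : ℕ) (hk : k = (attachSet G p H).ncard) :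
    (IsFiberBetween G p → ∃ A : Set V, IsIndepSet G A ∧
      A ⊆ {v | v ∈ p.support} \ {x, y} ∧ (∀ a ∈ A, ∀ u ∈ H, ¬ G.Adj a u) ∧ k - 1 ≤ A.ncard) ∧
    (IsEndFiber G p → ∃ A : Set V, IsIndepSet G A ∧
      A ⊆ {v | v ∈ p.support} \ {x} ∧ (∀ a ∈ A, ∀ u ∈ H, ¬ G.Adj a u) ∧ k ≤ A.ncard) ∧
    (IsLongestPath G p → ∃ A : Set V, IsIndepSet G A ∧
      A ⊆ {v | v ∈ p.support} ∧ (∀ a ∈ A, ∀ u ∈ H, ¬ G.Adj a u) ∧ k + 1 ≤ A.ncard) :=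
  stmt5_general G p H hH k hk

end GallaiFormal
end

section
/- If G is a connected (P_3 + P_1)-free graph, then every vertex of G of degree at least Δ(G) - 1 lies on every longest path of G (i.e., is a Gallai vertex). -/
open SimpleGraph

namespace GallaiFormal

variable {V : Type}

/-!
Suppose a longest path `p` from `a` to `b` misses `v`. Maximality of `p` makes `{v, a, b}`
independent (for `a b` by rotating the cycle `p + ba`, using connectivity). In a
`(P₃ + P₁)`-free graph a vertex with two neighbours in an independent triple `T` is adjacent to
all of `T`; call such vertices complete. Complete vertices are adjacent to all non-complete ones,
and adjacency is transitive among non-complete vertices. Every complete vertex lies on `p` (it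
sees `a`), no two are consecutive on `p` (`v` could be inserted between them), and no
non-complete neighbour of `v` lies on `p` (its successor on `p` would see `v` too). A complete
vertex `w` exists since `G` is connected and `T` is not a clique; it is adjacent to `v`, to the
non-complete vertices of `p`, which outnumber the complete ones, and to the non-complete
neighbours of `v`. Hence `deg w ≥ deg v + 2 > Δ(G)`.
-/

-- `d` is automatically distinct from `a`, `b`, `c`: it is adjacent to none of them.
def NoInducedP3AddP1 (G : SimpleGraph V) : Prop :=
  ∀ ⦃a b c d : V⦄, G.Adj a b → G.Adj b c → a ≠ c → ¬G.Adj a c →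
    ¬G.Adj a d → ¬G.Adj b d → ¬G.Adj c d → False

theorem IsFree.noInducedP3AddP1 {G : SimpleGraph V}
    (hfree : IsFree G (SimpleGraph.fromEdgeSet {s((0 : Fin 4), 1), s(1, 2)})) :
    NoInducedP3AddP1 G := by
  intro a b c d hab hbc hac hnac hnad hnbd hncd
  have := hab.symm; have := hbc.symm
  have := mt G.adj_symm hnac; have := mt G.adj_symm hnad
  have := mt G.adj_symm hnbd; have := mt G.adj_symm hncd
  have hinj : Function.Injective ![a, b, c, d] := by
    intro i j hij
    fin_cases i <;> fin_cases j <;> simp at hij ⊢ <;> subst hij <;> simp_all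
  refine hfree ⟨Set.range ![a, b, c, d], ⟨⟨Equiv.ofInjective _ hinj, ?_⟩⟩⟩
  intro i j
  fin_cases i <;> fin_cases j <;> simp [*]

def IsCompleteTo (G : SimpleGraph V) (T : Set V) (u : V) : Prop :=
  ∀ t ∈ T, G.Adj u t

variable {G : SimpleGraph V} {T : Set V}

theorem IsIndepSet.not_adj (hT : IsIndepSet G T) {x y : V} (hx : x ∈ T) (hy : y ∈ T) :
    ¬G.Adj x y := fun h => hT hx hy h.ne h

theorem not_isCompleteTo_of_mem {t : V} (ht : t ∈ T) : ¬IsCompleteTo G T t :=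
  fun h => G.irrefl (h t ht)

theorem eq_or_adj_of_reachable
    (htrans : ∀ ⦃s t r : V⦄, G.Adj s t → G.Adj t r → s ≠ r → G.Adj s r) {x y : V}
    (h : G.Reachable x y) : x = y ∨ G.Adj x y := by
  obtain ⟨W⟩ := h
  induction W with
  | nil => exact .inl rfl
  | @cons x z y hxz _ ih =>
    rcases ih with rfl | hzy
    · exact .inr hxz
    · by_cases hxy : x = y
      · exact .inl hxy
      · exact .inr (htrans hxz hzy hxy)

theorem isIndepSet_triple {x y z : V} (hxy : Gᶜ.Adj x y) (hxz : Gᶜ.Adj x z) (hyz : Gᶜ.Adj y z) :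
    IsIndepSet G {x, y, z} ∧ 2 < ({x, y, z} : Set V).encard := by
  rw [compl_adj] at hxy hxz hyz
  refine ⟨?_, ?_⟩
  · simp [IsIndepSet, Set.pairwise_insert, hxy.2, hxz.2, hyz.2, mt G.adj_symm hxy.2,
      mt G.adj_symm hxz.2, mt G.adj_symm hyz.2]
  · rw [Set.encard_eq_three.mpr ⟨x, y, z, hxy.1, hxz.1, hyz.1, rfl⟩]
    norm_num

-- `N(w)` contains `v`, `S \ C` and `N(v) \ C`, whereas `N(v) ⊆ (S ∩ C) ∪ (N(v) \ C)`.
theorem degree_add_two_le_degree [Fintype V] [DecidableEq V] [DecidableRel G.Adj]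
    {C : V → Prop} [DecidablePred C] {S : Finset V} {v w : V} (hvS : v ∉ S) (hCv : ¬C v)
    (hCS : ∀ u, C u → u ∈ S) (hvN : ∀ u, ¬C u → G.Adj v u → u ∉ S)
    (hw : ∀ u, ¬C u → G.Adj w u)
    (hcount : (S.filter C).card + 1 ≤ (S.filter (¬C ·)).card) :
    G.degree v + 2 ≤ G.degree w := by
  set N := G.neighborFinset v
  have hsplit := N.card_filter_add_card_filter_not C
  have hC : (N.filter C).card ≤ (S.filter C).card :=
    Finset.card_le_card fun u hu => by
      simp only [Finset.mem_filter] at hu ⊢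
      exact ⟨hCS u hu.2, hu.2⟩
  have hdisj : Disjoint (S.filter (¬C ·)) (N.filter (¬C ·)) :=
    Finset.disjoint_left.mpr fun u hu hu' => by
      simp only [Finset.mem_filter, N, mem_neighborFinset] at hu hu'
      exact hvN u hu'.2 hu'.1 hu.1
  have hv : v ∉ S.filter (¬C ·) ∪ N.filter (¬C ·) := by simp [hvS, N]
  have hsub : insert v (S.filter (¬C ·) ∪ N.filter (¬C ·)) ⊆ G.neighborFinset w := by
    intro u hu
    rw [mem_neighborFinset]
    simp only [Finset.mem_insert, Finset.mem_union, Finset.mem_filter] at hu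
    rcases hu with rfl | hu | hu
    exacts [hw u hCv, hw u hu.2, hw u hu.2]
  have hcard := Finset.card_le_card hsub
  rw [Finset.card_insert_of_notMem hv, Finset.card_union_of_disjoint hdisj,
    card_neighborFinset_eq_degree] at hcard
  have hdeg : G.degree v = N.card := (G.card_neighborFinset_eq_degree v).symm
  omega

namespace NoInducedP3AddP1

variable (hG : NoInducedP3AddP1 G)
include hG

theorem adj_of_adj_of_adj {u x y z : V} (hxy : x ≠ y) (hnxy : ¬G.Adj x y) (hnxz : ¬G.Adj x z)
    (hnyz : ¬G.Adj y z) (hux : G.Adj u x) (huy : G.Adj u y) : G.Adj u z :=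
  by_contra fun huz => hG hux.symm huy hxy hnxy hnxz huz hnyz

variable (hT : IsIndepSet G T)
include hT

theorem isCompleteTo_of_adj_of_adj {u x y : V} (hx : x ∈ T) (hy : y ∈ T) (hxy : x ≠ y)
    (hux : G.Adj u x) (huy : G.Adj u y) : IsCompleteTo G T u := fun _ hz =>
  hG.adj_of_adj_of_adj hxy (hT.not_adj hx hy) (hT.not_adj hx hz) (hT.not_adj hy hz) hux huy

theorem exists_compl_adj_compl_adj (hT3 : 2 < T.encard) {t : V} (ht : ¬IsCompleteTo G T t) :
    ∃ t₁ ∈ T, ∃ t₂ ∈ T, t₁ ≠ t₂ ∧ Gᶜ.Adj t t₁ ∧ Gᶜ.Adj t t₂ := by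
  set N := {x ∈ T | x = t ∨ G.Adj t x}
  have hN : N.encard ≤ 1 := by
    refine Set.encard_le_one_iff.mpr fun x y ⟨hx, hxt⟩ ⟨hy, hyt⟩ => ?_
    by_contra hxy
    rcases hxt with rfl | hxt <;> rcases hyt with rfl | hyt
    · exact hxy rfl
    · exact hT.not_adj hx hy hyt
    · exact hT.not_adj hy hx hxt
    · exact ht (hG.isCompleteTo_of_adj_of_adj hT hx hy hxy hxt hyt)
  have hS : 1 < {x ∈ T | Gᶜ.Adj t x}.encard := by
    by_contra! hS
    have hsub : T ⊆ N ∪ {x ∈ T | Gᶜ.Adj t x} := fun x hx => by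
      by_cases h : x = t ∨ G.Adj t x
      · exact Or.inl ⟨hx, h⟩
      · obtain ⟨hxt, hnxt⟩ := not_or.mp h
        exact Or.inr ⟨hx, (compl_adj G t x).mpr ⟨Ne.symm hxt, hnxt⟩⟩
    have hle := (Set.encard_le_encard hsub).trans (Set.encard_union_le _ _)
    have hT2 : T.encard ≤ 2 := hle.trans (by simpa [one_add_one_eq_two] using add_le_add hN hS)
    exact absurd hT3 hT2.not_gt
  obtain ⟨t₁, t₂, ⟨h₁, ht₁⟩, ⟨h₂, ht₂⟩, h₁₂⟩ := Set.one_lt_encard_iff.mp hS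
  exact ⟨t₁, h₁, t₂, h₂, h₁₂, ht₁, ht₂⟩

variable (hT3 : 2 < T.encard)
include hT3

theorem adj_of_isCompleteTo {w u : V} (hw : IsCompleteTo G T w) (hu : ¬IsCompleteTo G T u) :
    G.Adj w u := by
  obtain ⟨t₁, h₁, t₂, h₂, h₁₂, hut₁, hut₂⟩ := hG.exists_compl_adj_compl_adj hT hT3 hu
  by_contra hwu
  exact hG (hw t₁ h₁).symm (hw t₂ h₂) h₁₂ (hT.not_adj h₁ h₂) (mt G.adj_symm hut₁.2)
    hwu (mt G.adj_symm hut₂.2)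

theorem adj_trans {s t r : V} (hs : ¬IsCompleteTo G T s) (ht : ¬IsCompleteTo G T t)
    (hr : ¬IsCompleteTo G T r) (hst : G.Adj s t) (htr : G.Adj t r) (hsr : s ≠ r) : G.Adj s r := by
  obtain ⟨t₁, h₁, t₂, h₂, h₁₂, htt₁, htt₂⟩ := hG.exists_compl_adj_compl_adj hT hT3 ht
  -- `{t, t₁, t₂}` is independent as well, so a neighbour of `t` adjacent to `t₁` would be
  -- adjacent to `t₂` too, hence complete to `T`
  have miss : ∀ {x : V}, ¬IsCompleteTo G T x → G.Adj x t → ¬G.Adj x t₁ := fun hx hxt hxt₁ =>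
    hx (hG.isCompleteTo_of_adj_of_adj hT h₁ h₂ h₁₂ hxt₁ <| hG.adj_of_adj_of_adj htt₁.1 htt₁.2
      htt₂.2 (hT.not_adj h₁ h₂) hxt hxt₁)
  by_contra hnsr
  exact hG hst htr hsr hnsr (miss hs hst) htt₁.2 (miss hr htr.symm)

theorem exists_isCompleteTo (hconn : G.Preconnected) : ∃ w, IsCompleteTo G T w := by
  by_contra! h
  obtain ⟨x, y, hx, hy, hxy⟩ := Set.one_lt_encard_iff.mp (lt_trans (by norm_num) hT3)
  rcases eq_or_adj_of_reachable (fun s t r => hG.adj_trans hT hT3 (h s) (h t) (h r)) (hconn x y)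
    with hxy' | hxy'
  · exact hxy hxy'
  · exact hT.not_adj hx hy hxy'

end NoInducedP3AddP1

theorem exists_isPath_insert {v : V} : ∀ {a b : V} (p : G.Walk a b), p.IsPath → v ∉ p.support →
    ∀ d ∈ p.darts, G.Adj d.fst v → G.Adj v d.snd →
    ∃ q : G.Walk a b, q.IsPath ∧ q.length = p.length + 1 ∧ q.support ⊆ v :: p.support
  | _, _, .nil, _, _, d, hd, _, _ => by simp at hd
  | _, _, .cons h p, hp, hv, d, hd, h₁, h₂ => by
    rw [Walk.cons_isPath_iff] at hp
    simp only [Walk.support_cons, List.mem_cons, not_or] at hv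
    rw [Walk.darts_cons, List.mem_cons] at hd
    rcases hd with rfl | hd
    · refine ⟨.cons h₁ (.cons h₂ p), ?_, by simp, by simp⟩
      simp only [Walk.cons_isPath_iff, Walk.support_cons, List.mem_cons, not_or]
      exact ⟨⟨hp.1, hv.2⟩, Ne.symm hv.1, hp.2⟩
    · obtain ⟨q, hq, hlen, hsupp⟩ := exists_isPath_insert p hp.1 hv.2 d hd h₁ h₂
      refine ⟨.cons h q, hq.cons fun ha => ?_, by simp [hlen], ?_⟩
      · rcases List.mem_cons.mp (hsupp ha) with rfl | ha
        · exact hv.1 rfl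
        · exact hp.2 ha
      · intro x hx
        rcases List.mem_cons.mp hx with rfl | hx
        · simp
        · rcases List.mem_cons.mp (hsupp hx) with rfl | hx <;> simp [hx]

-- Rotate the closed walk `b, a, …, b` to start at `w`: its tail, reversed, is a path from `w`
-- through all of `p`, which `u` extends.
theorem exists_isPath_rotate [DecidableEq V] {a b u w : V} (p : G.Walk a b) (hp : p.IsPath)
    (hba : G.Adj b a) (hu : u ∉ p.support) (hw : w ∈ p.support) (huw : G.Adj u w) :
    ∃ (y : V) (q : G.Walk u y), q.IsPath ∧ q.length = p.length + 1 := by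
  set c := Walk.cons hba p
  have hwc : w ∈ c.support := by simp [c, hw]
  set c' := c.rotate w hwc
  have hrot : c'.support.tail ~r p.support := by simpa [c] using Walk.support_rotate c w hwc
  have hnil : ¬c'.Nil := by simp [c', c]
  refine ⟨_, .cons huw c'.tail.reverse, ?_, ?_⟩
  · rw [Walk.cons_isPath_iff, Walk.isPath_reverse_iff, Walk.isPath_def, Walk.support_reverse,
      List.mem_reverse, Walk.support_tail_of_not_nil _ hnil]
    exact ⟨hrot.perm.nodup_iff.mpr hp.support_nodup, fun h => hu (hrot.perm.subset h)⟩
  · have := Walk.length_tail_add_one hnil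
    simp only [Walk.length_cons, Walk.length_reverse, c', Walk.length_rotate, c] at this ⊢
    omega

theorem countP_support_le {P : V → Prop} [DecidablePred P] : ∀ {a b : V} (p : G.Walk a b),
    ¬P b → (∀ d ∈ p.darts, ¬P d.fst ∨ ¬P d.snd) →
    p.support.countP P ≤ p.support.countP (¬P ·) ∧
      (¬P a → p.support.countP P + 1 ≤ p.support.countP (¬P ·))
  | _, _, .nil, hb, _ => by simp [hb]
  | a, _, @Walk.cons _ _ _ c _ h p, hb, hd => by
    have ih := countP_support_le p hb fun d hd' => hd d (by simp [hd'])
    have hfirst := hd _ List.mem_cons_self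
    simp only [Walk.support_cons, List.countP_cons]
    by_cases ha : P a <;> by_cases hc : P c <;> simp_all <;> omega

namespace IsLongestPath

variable {a b : V} {p : G.Walk a b}

theorem reverse (hp : IsLongestPath G p) : IsLongestPath G p.reverse :=
  ⟨hp.1.reverse, fun _ _ q hq => p.length_reverse ▸ hp.2 q hq⟩

theorem not_adj_start_s6 (hp : IsLongestPath G p) {u : V} (hu : u ∉ p.support) : ¬G.Adj u a :=
  fun h => by simpa using hp.2 (.cons h p) (hp.1.cons hu)

theorem not_adj_end (hp : IsLongestPath G p) {u : V} (hu : u ∉ p.support) : ¬G.Adj u b :=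
  hp.reverse.not_adj_start_s6 (by simpa using hu)

theorem not_adj_of_mem_darts (hp : IsLongestPath G p) {v : V} (hv : v ∉ p.support) {d : G.Dart}
    (hd : d ∈ p.darts) (h₁ : G.Adj d.fst v) : ¬G.Adj v d.snd := fun h₂ => by
  obtain ⟨q, hq, hlen, -⟩ := exists_isPath_insert p hp.1 hv d hd h₁ h₂
  have := hp.2 q hq
  omega

theorem compl_adj [DecidableEq V] (hp : IsLongestPath G p) (hG : G.Preconnected) {v : V}
    (hv : v ∉ p.support) : Gᶜ.Adj a b := by
  obtain ⟨W⟩ := hG v a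
  obtain ⟨d, -, hd₁, hd₂⟩ := W.exists_boundary_dart {x | x ∉ p.support} hv (by simp)
  simp only [Set.mem_ofPred_eq, not_not] at hd₁ hd₂
  refine (SimpleGraph.compl_adj G a b).mpr ⟨?_, fun hab => ?_⟩
  · rintro rfl
    rw [Walk.nil_iff_support_eq.mp (Walk.isPath_iff_nil.mp hp.1), List.mem_singleton] at hd₂
    exact hp.not_adj_start_s6 hd₁ (hd₂ ▸ d.adj)
  · obtain ⟨y, q, hq, hlen⟩ := exists_isPath_rotate p hp.1 hab.symm hd₁ hd₂ d.adj
    have := hp.2 q hq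
    omega

theorem mem_support_of_isCompleteTo (hp : IsLongestPath G p) (ha : a ∈ T) {u : V}
    (hu : IsCompleteTo G T u) : u ∈ p.support :=
  by_contra fun hu' => hp.not_adj_start_s6 hu' (hu a ha)

theorem not_isCompleteTo_or_not_isCompleteTo (hp : IsLongestPath G p) {v : V} (hvT : v ∈ T)
    (hv : v ∉ p.support) {d : G.Dart} (hd : d ∈ p.darts) :
    ¬IsCompleteTo G T d.fst ∨ ¬IsCompleteTo G T d.snd := by
  by_contra! h
  exact hp.not_adj_of_mem_darts hv hd (h.1 v hvT) (h.2 v hvT).symm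

theorem notMem_support_of_adj (hG : NoInducedP3AddP1 G) (hT : IsIndepSet G T)
    (hT3 : 2 < T.encard) (hp : IsLongestPath G p) {v : V} (hvT : v ∈ T) (hbT : b ∈ T)
    (hv : v ∉ p.support) {u : V} (hu : ¬IsCompleteTo G T u) (hvu : G.Adj v u) :
    u ∉ p.support := by
  intro hup
  have hub : u ≠ b := fun h => hT.not_adj hvT hbT (h ▸ hvu)
  obtain ⟨d, hd, rfl⟩ : ∃ d ∈ p.darts, d.fst = u := by
    rw [← p.map_fst_darts_append, List.mem_append, List.mem_singleton] at hup
    simpa [hub] using hup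
  refine hp.not_adj_of_mem_darts hv hd hvu.symm ?_
  by_cases hc : IsCompleteTo G T d.snd
  · exact (hc v hvT).symm
  · exact hG.adj_trans hT hT3 (not_isCompleteTo_of_mem hvT) hu hc hvu d.adj
      fun h => hv (h ▸ p.dart_snd_mem_support_of_mem_darts hd)

end IsLongestPath

theorem exists_degree_add_two_le [Fintype V] [DecidableRel G.Adj] (hG : NoInducedP3AddP1 G)
    (hconn : G.Preconnected) {a b v : V} {p : G.Walk a b} (hp : IsLongestPath G p)
    (hv : v ∉ p.support) : ∃ w, G.degree v + 2 ≤ G.degree w := by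
  classical
  set T : Set V := {v, a, b}
  have hvT : v ∈ T := by simp [T]
  have haT : a ∈ T := by simp [T]
  have hbT : b ∈ T := by simp [T]
  obtain ⟨hT, hT3⟩ : IsIndepSet G T ∧ 2 < T.encard := isIndepSet_triple
    ((compl_adj G v a).mpr ⟨fun h => hv (h ▸ p.start_mem_support), hp.not_adj_start_s6 hv⟩)
    ((compl_adj G v b).mpr ⟨fun h => hv (h ▸ p.end_mem_support), hp.not_adj_end hv⟩)
    (hp.compl_adj hconn hv)
  obtain ⟨w, hw⟩ := hG.exists_isCompleteTo hT hT3 hconn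
  have hcount := (countP_support_le p (not_isCompleteTo_of_mem hbT)
    fun d hd => hp.not_isCompleteTo_or_not_isCompleteTo hvT hv hd).2 (not_isCompleteTo_of_mem haT)
  rw [← hp.1.support_nodup.card_eq_countP, ← hp.1.support_nodup.card_eq_countP] at hcount
  exact ⟨w, degree_add_two_le_degree (by simpa using hv) (not_isCompleteTo_of_mem hvT)
    (fun u hu => by simpa using hp.mem_support_of_isCompleteTo haT hu)
    (fun u hu hvu => by simpa using hp.notMem_support_of_adj hG hT hT3 hvT hbT hv hu hvu)
    (fun u hu => hG.adj_of_isCompleteTo hT hT3 hw hu) hcount⟩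

/-- in a connected `(P₃ + P₁)`-free graph, every vertex of degree at least
`Δ(G) - 1` is a Gallai vertex. -/
theorem stmt6 [Fintype V] (G : SimpleGraph V) [DecidableRel G.Adj]
    (hconn : G.Connected)
    (hfree : IsFree G (SimpleGraph.fromEdgeSet {s((0 : Fin 4), 1), s(1, 2)}))
    (v : V) (hdeg : G.maxDegree - 1 ≤ G.degree v) :
    IsGallaiVertex G v := by
  intro a b p hp hmax
  by_contra hv
  obtain ⟨w, hw⟩ :=
    exists_degree_add_two_le hfree.noInducedP3AddP1 hconn.preconnected ⟨hp, hmax⟩ hv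
  have := G.degree_le_maxDegree w
  omega

end GallaiFormal
end

section
/- Let P be a path in a graph G with endpoints x and y, let H be a complete component of G - V(P) with attachment points s_1, ..., s_k listed in order of traversal of P from x to y, with S = {s_1, ..., s_k}, and suppose that for every S_0 ⊆ S with |S_0| ≤ |V(H)|, the bipartite graph induced between S_0 and V(H) has a matching saturating S_0. Then: (1) if w and w' lie in distinct components of P - S - V(P[x,s_1]), rank(w) + rank(w') < |V(H)|, and ww' is an edge of G, then G has a path with endpoints x and y longer than P; (2) if w and w' lie in distinct components of P - S, rank(w) + rank(w') < |V(H)|, and ww' is an edge of G, then G has a path with endpoint y that is longer than P. -/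
/-!
Let `[a, i]` and `[b, j]` be the maximal runs of `P - S` ending at `w = vᵢ` and `w' = vⱼ`; since
some attachment point lies strictly between them, `s' = v_{b-1}` is an attachment point with
`i < b - 1`, and so is `s = v_{a-1}` when `a > 0`. By the matching condition `s` and `s'` have
distinct neighbours `h`, `h'` in `H` (unless `|H| = 1`), and as `H` is complete some ordering of
`V(H)` is an `hh'`-path. The path `v₀ ⋯ s h ⋯ h' s' v_{b-2} ⋯ vᵢ vⱼ ⋯ y` drops the
`(i - a) + (j - b) ≤ rank w + rank w' < |V(H)|` vertices `v_a ⋯ v_{i-1}` and `v_b ⋯ v_{j-1}` of `P`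
and gains all of `V(H)`. It starts at `x` when `a > 0`, which is the case in part (1); when
`a = 0` it starts in `H`.
-/

open SimpleGraph

namespace GallaiFormal

variable {V : Type}

section

variable {G : SimpleGraph V} {x y : V} {p : G.Walk x y} {H : Set V} {i b j : ℕ}

theorem exists_isPath_of_isChain {L : List V} (hc : L.IsChain G.Adj) (hnd : L.Nodup)
    {u v : V} (hu : L.head? = some u) (hv : L.getLast? = some v) :
    ∃ q : G.Walk u v, q.IsPath ∧ q.length + 1 = L.length := by
  have hne : L ≠ [] := by rintro rfl; simp at hu
  refine ⟨(Walk.ofSupport L hne hc).copy ?_ ?_, ?_, ?_⟩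
  · simpa [List.head?_eq_some_head hne] using hu
  · simpa [List.getLast?_eq_some_getLast hne] using hv
  · rw [Walk.isPath_copy, Walk.isPath_def, Walk.support_ofSupport]
    exact hnd
  · rw [Walk.length_copy, Walk.length_ofSupport]
    have := List.length_pos_iff.2 hne
    omega

theorem exists_isPath_append_reverse_segment (hp : p.IsPath)
    {pre : List V} {u w : V} (hnd : pre.Nodup) (hc : pre.IsChain G.Adj)
    (hu : pre.head? = some u) (hw : pre.getLast? = some w)
    (hdisj : ∀ v ∈ pre, v ∉ p.support.drop i) (hib : i < b) (hbj : b ≤ j) (hj : j ≤ p.length)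
    (hwb : G.Adj w (p.getVert (b - 1))) (hij : G.Adj (p.getVert i) (p.getVert j)) :
    ∃ q : G.Walk u y, q.IsPath ∧ q.length = pre.length + (b - i) + (p.length - j) := by
  set S := p.support
  set mid := (S.drop i).take (b - i)
  set tail := S.drop j
  have hS : ∀ k ≤ p.length, S[k]? = some (p.getVert k) :=
    fun k hk => (p.getVert_eq_support_getElem? hk).symm
  have hsub : (mid ++ tail).Sublist (S.drop i) := by
    have : S.drop i = mid ++ S.drop b := by
      rw [← List.take_append_drop (b - i) (S.drop i), List.drop_drop, Nat.add_sub_cancel' hib.le]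
    rw [this]
    exact (List.drop_sublist_drop_left S hbj).append_left mid
  have hperm : (mid.reverse ++ tail).Perm (mid ++ tail) := (List.reverse_perm mid).append_right tail
  have hmid_head : mid.head? = some (p.getVert i) := by
    rw [List.head?_take, if_neg (by omega), List.head?_drop, hS i (by omega)]
  have hmid_last : mid.getLast? = some (p.getVert (b - 1)) := by
    rw [List.getLast?_take, if_neg (by omega), List.getElem?_drop,
      show i + (b - i - 1) = b - 1 by omega, hS _ (by omega), Option.some_or]
  have htail_head : tail.head? = some (p.getVert j) := by rw [List.head?_drop, hS j hj]
  have htail_last : tail.getLast? = some y := by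
    rw [List.getLast?_drop, if_neg (by simp [S]; omega), List.getLast?_eq_getElem?,
      Walk.length_support, Nat.add_sub_cancel, hS _ le_rfl, Walk.getVert_length]
  have hchain : (pre ++ (mid.reverse ++ tail)).IsChain G.Adj := by
    refine List.isChain_append.2 ⟨hc, List.isChain_append.2 ⟨?_, ?_, ?_⟩, ?_⟩
    · exact List.isChain_reverse.2 <| ((p.isChain_adj_support.drop i).take _).imp
        fun _ _ h => h.symm
    · exact p.isChain_adj_support.drop j
    · simpa [List.getLast?_reverse, hmid_head, htail_head] using hij
    · simpa [hw, List.head?_append, List.head?_reverse, hmid_last] using hwb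
  have hnodup : (pre ++ (mid.reverse ++ tail)).Nodup := by
    refine List.nodup_append.2 ⟨hnd, hperm.nodup_iff.2 ?_, ?_⟩
    · exact hsub.nodup (hp.support_nodup.sublist (List.drop_sublist _ _))
    · intro v hv v' hv' hvv'
      subst hvv'
      exact hdisj v hv (hsub.subset (hperm.subset hv'))
  obtain ⟨q, hq, hlen⟩ := exists_isPath_of_isChain (v := y) hchain hnodup
    (by rw [List.head?_append, hu, Option.some_or]) (by simp [List.getLast?_append, htail_last])
  refine ⟨q, hq, ?_⟩
  simp only [List.length_append, List.length_reverse, List.length_take, List.length_drop,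
    Walk.length_support, mid, tail, S] at hlen
  omega

theorem exists_nodup_list_head_getLast {H : Set V} (hfin : H.Finite) {h h' : V} (hh : h ∈ H)
    (hh' : h' ∈ H) (hsingle : h = h' → H.ncard ≤ 1) :
    ∃ l : List V, l.Nodup ∧ (∀ v ∈ l, v ∈ H) ∧ l.length = H.ncard ∧
      l.head? = some h ∧ l.getLast? = some h' := by
  classical
  by_cases heq : h = h'
  · subst heq
    have := (Set.ncard_pos hfin).2 ⟨h, hh⟩
    refine ⟨[h], List.nodup_singleton h, by simpa using hh, ?_, rfl, rfl⟩
    have := hsingle rfl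
    simp only [List.length_singleton]
    omega
  · set l₀ := hfin.toFinset.toList
    have hl₀ : ∀ v, v ∈ l₀ ↔ v ∈ H := by simp [l₀]
    set r := (l₀.erase h).erase h'
    have hh'₀ : h' ∈ l₀.erase h := (List.mem_erase_of_ne (Ne.symm heq)).2 ((hl₀ h').2 hh')
    have hperm : (h :: (r ++ [h'])).Perm l₀ :=
      ((List.perm_append_singleton h' r).cons h).trans <|
        ((List.perm_cons_erase hh'₀).symm.cons h).trans (List.perm_cons_erase ((hl₀ h).2 hh)).symm
    refine ⟨h :: (r ++ [h']), hperm.nodup_iff.2 (Finset.nodup_toList _),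
      fun v hv => (hl₀ v).1 (hperm.subset hv), ?_, rfl, ?_⟩
    · rw [hperm.length_eq, Finset.length_toList, Set.ncard_eq_toFinset_card _ hfin]
    · rw [← List.cons_append, List.getLast?_concat]

theorem exists_adj_pair_of_matching {S H : Set V} (hS : ∀ s ∈ S, ∃ u ∈ H, G.Adj u s)
    (hmatch : ∀ S0 ⊆ S, S0.ncard ≤ H.ncard →
      ∃ f : V → V, Set.InjOn f S0 ∧ ∀ s ∈ S0, f s ∈ H ∧ G.Adj s (f s))
    {s s' : V} (hs : s ∈ S) (hs' : s' ∈ S) (hne : s ≠ s') :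
    ∃ h ∈ H, ∃ h' ∈ H, G.Adj s h ∧ G.Adj s' h' ∧ (h = h' → H.ncard ≤ 1) := by
  by_cases hH : H.ncard ≤ 1
  · obtain ⟨h, hh, hsh⟩ := hS s hs
    obtain ⟨h', hh', hsh'⟩ := hS s' hs'
    exact ⟨h, hh, h', hh', hsh.symm, hsh'.symm, fun _ => hH⟩
  · obtain ⟨f, hinj, hf⟩ := hmatch {s, s'} (Set.pair_subset hs hs')
      (by rw [Set.ncard_pair hne]; omega)
    obtain ⟨hfs, hsfs⟩ := hf s (by simp)
    obtain ⟨hfs', hsfs'⟩ := hf s' (by simp)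
    exact ⟨f s, hfs, f s', hfs', hsfs, hsfs', fun h => absurd (hinj (by simp) (by simp) h) hne⟩

theorem exists_run_start {P : ℕ → Prop} {k : ℕ} (hk : ¬ P k) :
    ∃ a ≤ k, (∀ m, a ≤ m → m ≤ k → ¬ P m) ∧ (0 < a → P (a - 1)) := by
  induction k with
  | zero => exact ⟨0, le_rfl, fun m _ hm => by rwa [Nat.le_zero.1 hm], by simp⟩
  | succ k ih =>
    by_cases hPk : P k
    · exact ⟨k + 1, le_rfl, fun m h₁ h₂ => by rwa [show m = k + 1 by omega], fun _ => hPk⟩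
    · obtain ⟨a, hak, hrun, hstart⟩ := ih hPk
      refine ⟨a, by omega, fun m h₁ h₂ => ?_, hstart⟩
      rcases Nat.lt_or_ge m (k + 1) with hm | hm
      · exact hrun m h₁ (by omega)
      · rwa [show m = k + 1 by omega]

theorem sub_le_rankAt {S : Set V} {a k : ℕ} (hak : a ≤ k)
    (hrun : ∀ m, a ≤ m → m ≤ k → p.getVert m ∉ S) : k - a ≤ rankAt G p S k :=
  le_csSup ⟨k, fun _ ⟨_, h, _⟩ => by omega⟩ ⟨a, by omega, hrun⟩

theorem exists_run_starts {S : Set V}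
    (hi : p.getVert i ∉ S) (hj : p.getVert j ∉ S)
    (hmid : ∃ m, i < m ∧ m < j ∧ p.getVert m ∈ S) :
    ∃ a b, a ≤ i ∧ i < b ∧ b ≤ j ∧ (∀ m, a ≤ m → m ≤ i → p.getVert m ∉ S) ∧
      (0 < a → p.getVert (a - 1) ∈ S) ∧ p.getVert (b - 1) ∈ S ∧
      i - a + (j - b) ≤ rankAt G p S i + rankAt G p S j := by
  obtain ⟨a, hai, hruna, hstarta⟩ := exists_run_start (P := fun m => p.getVert m ∈ S) hi
  obtain ⟨b, hbj, hrunb, hstartb⟩ := exists_run_start (P := fun m => p.getVert m ∈ S) hj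
  obtain ⟨m, him, hmj, hm⟩ := hmid
  have hmb : m < b := by
    by_contra! hbm
    exact hrunb m hbm hmj.le hm
  exact ⟨a, b, hai, by omega, hbj, hruna, hstarta, hstartb (by omega),
    add_le_add (sub_le_rankAt hai hruna) (sub_le_rankAt hbj hrunb)⟩

theorem exists_longer_isPath_of_attach_before (hp : p.IsPath) (hHp : ∀ v ∈ H, v ∉ p.support)
    (hcl : G.IsClique H)
    (hmatch : ∀ S0 ⊆ attachSet G p H, S0.ncard ≤ H.ncard →
      ∃ f : V → V, Set.InjOn f S0 ∧ ∀ s ∈ S0, f s ∈ H ∧ G.Adj s (f s))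
    {a : ℕ} (ha : 0 < a) (hai : a ≤ i) (hib : i < b) (hbj : b ≤ j) (hj : j ≤ p.length)
    (hsa : p.getVert (a - 1) ∈ attachSet G p H) (hsb : p.getVert (b - 1) ∈ attachSet G p H)
    (hlen : i - a + (j - b) < H.ncard) (hadj : G.Adj (p.getVert i) (p.getVert j)) :
    ∃ q : G.Walk x y, q.IsPath ∧ p.length < q.length := by
  have hne : p.getVert (a - 1) ≠ p.getVert (b - 1) := fun h => by
    have := hp.getVert_injOn (by simp; omega) (by simp; omega) h
    omega
  obtain ⟨h, hh, h', hh', hah, hbh', hsingle⟩ :=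
    exists_adj_pair_of_matching (fun _ hs => hs.2) hmatch hsa hsb hne
  obtain ⟨l, hlnd, hlH, hllen, hlhead, hllast⟩ :=
    exists_nodup_list_head_getLast (Set.finite_of_ncard_pos (by omega)) hh hh' hsingle
  have htake_last : (p.support.take a).getLast? = some (p.getVert (a - 1)) := by
    rw [List.getLast?_take, if_neg (by omega), ← p.getVert_eq_support_getElem? (by omega),
      Option.some_or]
  have hchain : (p.support.take a ++ l).IsChain G.Adj :=
    List.isChain_append.2 ⟨p.isChain_adj_support.take a,
      (hlnd.pairwise_of_set_pairwise (hcl.subset hlH)).isChain,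
      by simpa [htake_last, hlhead] using hah⟩
  have hnd : (p.support.take a ++ l).Nodup :=
    List.nodup_append.2 ⟨hp.support_nodup.sublist (List.take_sublist _ _), hlnd,
      fun v hv v' hv' hvv' => hHp v' (hlH v' hv') (hvv' ▸ List.mem_of_mem_take hv)⟩
  have hhead : (p.support.take a ++ l).head? = some x := by
    rw [List.head?_append, List.head?_take, if_neg (by omega), List.head?_eq_getElem?,
      ← p.getVert_eq_support_getElem? (Nat.zero_le _), Walk.getVert_zero, Option.some_or]
  have hdisj : ∀ v ∈ p.support.take a ++ l, v ∉ p.support.drop i := by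
    intro v hv hvi
    rcases List.mem_append.1 hv with hv | hv
    · exact List.disjoint_take_drop hp.support_nodup hai hv hvi
    · exact hHp v (hlH v hv) (List.mem_of_mem_drop hvi)
  obtain ⟨q, hq, hqlen⟩ := exists_isPath_append_reverse_segment hp hnd hchain hhead
    (by rw [List.getLast?_append, hllast, Option.some_or]) hdisj hib hbj hj hbh'.symm hadj
  refine ⟨q, hq, ?_⟩
  rw [hqlen, List.length_append, List.length_take, Walk.length_support, hllen]
  omega

theorem exists_longer_isPath_of_no_attach_before (hp : p.IsPath)
    (hHp : ∀ v ∈ H, v ∉ p.support) (hcl : G.IsClique H)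
    (hib : i < b) (hbj : b ≤ j) (hj : j ≤ p.length)
    (hsb : p.getVert (b - 1) ∈ attachSet G p H)
    (hlen : i + (j - b) < H.ncard) (hadj : G.Adj (p.getVert i) (p.getVert j)) :
    ∃ (z : V) (q : G.Walk z y), q.IsPath ∧ p.length < q.length := by
  obtain ⟨h', hh', hbh'⟩ := hsb.2
  obtain ⟨h, hh, hsingle⟩ : ∃ h ∈ H, h = h' → H.ncard ≤ 1 := by
    by_cases hH : H.ncard ≤ 1
    · exact ⟨h', hh', fun _ => hH⟩
    · obtain ⟨h, hh, hne⟩ := Set.exists_ne_of_one_lt_ncard (s := H) (by omega) h'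
      exact ⟨h, hh, fun heq => absurd heq hne⟩
  obtain ⟨l, hlnd, hlH, hllen, hlhead, hllast⟩ :=
    exists_nodup_list_head_getLast (Set.finite_of_ncard_pos (by omega)) hh hh' hsingle
  obtain ⟨q, hq, hqlen⟩ := exists_isPath_append_reverse_segment hp hlnd
    (hlnd.pairwise_of_set_pairwise (hcl.subset hlH)).isChain hlhead hllast
    (fun v hv hvi => hHp v (hlH v hv) (List.mem_of_mem_drop hvi)) hib hbj hj hbh' hadj
  exact ⟨h, q, hq, by omega⟩

end

/-- Lemma, parts 3 and 4: `H` is a complete component of `G - V(p)` whose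
attachment set `S` satisfies the matching (saturation) condition.  (1) If `w = p.getVert i`
and `w' = p.getVert j` lie in distinct components of `P - S - V(P[x,s₁])` with rank sum less
than `|V(H)|` and `ww' ∈ E(G)`, there is a longer `xy`-path; (2) if they lie in distinct
components of `P - S` with rank sum less than `|V(H)|` and `ww' ∈ E(G)`, there is a longer
path with endpoint `y`. -/
theorem stmt9 (G : SimpleGraph V) {x y : V} (p : G.Walk x y) (hp : p.IsPath)
    (H : Set V) (hH : IsCompOutside G {v | v ∈ p.support} H) (hcomplete : G.IsClique H)
    (hmatch : ∀ S0 ⊆ attachSet G p H, S0.ncard ≤ H.ncard →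
      ∃ f : V → V, Set.InjOn f S0 ∧ ∀ s ∈ S0, f s ∈ H ∧ G.Adj s (f s)) :
    (∀ i j : ℕ, i < j → j ≤ p.length →
      p.getVert i ∉ attachSet G p H → p.getVert j ∉ attachSet G p H →
      (∃ m < i, p.getVert m ∈ attachSet G p H) →
      (∃ m, i < m ∧ m < j ∧ p.getVert m ∈ attachSet G p H) →
      rankAt G p (attachSet G p H) i + rankAt G p (attachSet G p H) j < H.ncard →
      G.Adj (p.getVert i) (p.getVert j) →
      ∃ q : G.Walk x y, q.IsPath ∧ p.length < q.length) ∧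
    (∀ i j : ℕ, i < j → j ≤ p.length →
      p.getVert i ∉ attachSet G p H → p.getVert j ∉ attachSet G p H →
      (∃ m, i < m ∧ m < j ∧ p.getVert m ∈ attachSet G p H) →
      rankAt G p (attachSet G p H) i + rankAt G p (attachSet G p H) j < H.ncard →
      G.Adj (p.getVert i) (p.getVert j) →
      ∃ (z : V) (q : G.Walk z y), q.IsPath ∧ p.length < q.length) := by
  have hHp : ∀ v ∈ H, v ∉ p.support := fun v hv => Set.disjoint_left.1 hH.2.1 hv
  constructor
  · intro i j _ hj hi hj' ⟨m, hmi, hm⟩ hmid hrank hadj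
    obtain ⟨a, b, hai, hib, hbj, hrun, ha, hb, hab⟩ := exists_run_starts hi hj' hmid
    have hapos : 0 < a := Nat.pos_of_ne_zero fun ha0 => hrun m (by omega) hmi.le hm
    exact exists_longer_isPath_of_attach_before hp hHp hcomplete hmatch hapos hai hib hbj hj
      (ha hapos) hb (by omega) hadj
  · intro i j _ hj hi hj' hmid hrank hadj
    obtain ⟨a, b, hai, hib, hbj, -, ha, hb, hab⟩ := exists_run_starts hi hj' hmid
    rcases Nat.eq_zero_or_pos a with rfl | hapos
    · exact exists_longer_isPath_of_no_attach_before hp hHp hcomplete hib hbj hj hb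
        (by omega) hadj
    · exact ⟨x, exists_longer_isPath_of_attach_before hp hHp hcomplete hmatch hapos hai hib hbj
        hj (ha hapos) hb (by omega) hadj⟩

end GallaiFormal
end

section
/- Let G be a k-connected graph with independence number α(G) ≤ k + 2, let P be a longest path in G with endpoints x and y, and let H be a component of G - V(P) with attachment point set S. Then: (1) |S| = k; (2) H is a complete graph; (3) P - S has exactly k + 1 components, each with at least |V(H)| vertices; (4) if w and w' lie in distinct components of P - S and rank(w) + rank(w') < |V(H)|, then ww' is not an edge of G; (5) in each component of P - S, the vertices of rank less than |V(H)| form a clique. -/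
open SimpleGraph

namespace GallaiFormal

variable {V : Type}

/-!
Let `S` be the set of attachment points of `H` on the longest path `P = x ⋯ y`. Rerouting `P`
through `H` shows that `x, y ∉ S`, that no two consecutive vertices of `P` lie in `S`, and that
the first vertices of the components of `P - S` (namely `x` and the successors of the vertices of
`S`) are pairwise nonadjacent. With a vertex of `H` they form an independent set of size
`|S| + 2`, so `|S| ≤ k`; `k`-connectivity gives `|S| ≥ k`, and two nonadjacent vertices of `H`
would give `k + 3` independent vertices, so `H` is complete.

Two distinct attachment points have distinct neighbours in `H` when `|H| ≥ 2`, since otherwise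
that common neighbour and the other `k - 2` attachment points would separate `H`. Hence a
Hamiltonian path of `H` can replace a component of `P - S`, or, when `ww'` is an edge, the two
initial runs of `w` and `w'` (of total length `rank w + rank w'`); maximality of `P` gives (3)
and (4). For (5), two nonadjacent vertices of small rank in one component, together with a
vertex of `H` and the first vertices of the other `k` components, would by (4) form an
independent set of size `k + 3`.
-/

section Splicing

variable {G : SimpleGraph V}

lemma exists_walk_support_eq :
    ∀ (l : List V) (hl : l ≠ []), l.IsChain G.Adj →
      ∃ w : G.Walk (l.head hl) (l.getLast hl), w.support = l
  | [], h, _ => absurd rfl h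
  | [a], _, _ => ⟨.nil, rfl⟩
  | a :: b :: l, _, hc => by
    rw [List.isChain_cons_cons] at hc
    obtain ⟨w, hw⟩ := exists_walk_support_eq (b :: l) (List.cons_ne_nil b l) hc.2
    exact ⟨(Walk.cons hc.1 w).copy rfl (List.getLast_cons_cons ..).symm,
      (Walk.support_copy ..).trans (congrArg (List.cons a) hw)⟩

variable {x y : V} {p : G.Walk x y}

lemma IsLongestPath.length_le_of_isChain (hp : IsLongestPath G p) {l : List V}
    (hl : l.IsChain G.Adj) (hnd : l.Nodup) : l.length ≤ p.length + 1 := by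
  rcases eq_or_ne l [] with rfl | hne
  · simp
  obtain ⟨w, hw⟩ := exists_walk_support_eq l hne hl
  have := hp.2 w (by rwa [Walk.isPath_def, hw])
  have := w.length_support
  rw [hw] at this
  omega

lemma IsLongestPath.length_add_le_of_splice (hp : IsLongestPath G p) {A L B : List V}
    (hA : A.IsChain G.Adj) (hB : B.IsChain G.Adj) (hAB : (A ++ B).Nodup)
    (hABp : ∀ z ∈ A ++ B, z ∈ p.support) (hL : L.IsChain G.Adj) (hLnd : L.Nodup)
    (hLp : ∀ z ∈ L, z ∉ p.support) (hAL : ∀ s ∈ A.getLast?, ∀ u ∈ L.head?, G.Adj s u)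
    (hLB : ∀ v ∈ L.getLast?, ∀ t ∈ B.head?, G.Adj v t) :
    A.length + L.length + B.length ≤ p.length + 1 := by
  rcases eq_or_ne L [] with rfl | hLne
  · have := (hAB.subperm hABp).length_le
    rw [List.length_append, p.length_support] at this
    simpa using this
  have hchain : (A ++ (L ++ B)).IsChain G.Adj := by
    refine List.isChain_append.2 ⟨hA, List.isChain_append.2 ⟨hL, hB, hLB⟩, ?_⟩
    obtain ⟨u, L, rfl⟩ := List.exists_cons_of_ne_nil hLne
    simpa using hAL
  have hnd : (A ++ (L ++ B)).Nodup := by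
    refine (List.perm_append_comm_assoc A L B).nodup_iff.2 (List.nodup_append.2 ⟨hLnd, hAB, ?_⟩)
    rintro u hu v hv rfl
    exact hLp u hu (hABp u hv)
  simpa [add_assoc] using hp.length_le_of_isChain hchain hnd

end Splicing

section Bypass

variable {G : SimpleGraph V} {x y : V} {p : G.Walk x y}

lemma getLast?_take_support {i : ℕ} (hi : i ≤ p.length) :
    (p.support.take (i + 1)).getLast? = some (p.getVert i) := by
  rw [List.getLast?_take, if_neg (Nat.succ_ne_zero i), Nat.add_sub_cancel,
    ← p.getVert_eq_support_getElem? hi]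
  rfl

lemma head?_drop_support {i : ℕ} (hi : i ≤ p.length) :
    (p.support.drop i).head? = some (p.getVert i) := by
  rw [List.head?_drop, ← p.getVert_eq_support_getElem? hi]

lemma mem_getLast?_take_support {a : ℕ} (ha : a ≤ p.length + 1) {s : V} :
    s ∈ (p.support.take a).getLast? ↔ 0 < a ∧ s = p.getVert (a - 1) := by
  rcases a with _ | a
  · simp
  · rw [getLast?_take_support (by omega)]
    simp [eq_comm]

lemma mem_head?_drop_support {e : ℕ} {t : V} :
    t ∈ (p.support.drop e).head? ↔ e ≤ p.length ∧ t = p.getVert e := by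
  by_cases he : e ≤ p.length
  · rw [head?_drop_support he]
    simp [he, eq_comm]
  · rw [List.drop_of_length_le (by rw [p.length_support]; omega)]
    simp [he]

/-- Maximality of `p` against the path `p[0, a) ++ L ++ p[e, n]`. -/
lemma IsLongestPath.add_length_le_of_bypass (hp : IsLongestPath G p) {L : List V}
    (hL : L.IsChain G.Adj) (hLnd : L.Nodup) (hLp : ∀ z ∈ L, z ∉ p.support) {a e : ℕ}
    (hae : a ≤ e) (he : e ≤ p.length + 1)
    (hAL : ∀ s ∈ (p.support.take a).getLast?, ∀ u ∈ L.head?, G.Adj s u)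
    (hLB : ∀ v ∈ L.getLast?, ∀ t ∈ (p.support.drop e).head?, G.Adj v t) :
    a + L.length ≤ e := by
  have hsub : (p.support.take a ++ p.support.drop e).Sublist p.support := by
    simpa using (List.take_sublist_take_left (l := p.support) hae).append_right (p.support.drop e)
  have := hp.length_add_le_of_splice (p.isChain_adj_support.take a)
    (p.isChain_adj_support.drop e) (hp.1.support_nodup.sublist hsub) (fun z hz => hsub.subset hz)
    hL hLnd hLp hAL hLB
  simp only [List.length_take, List.length_drop, p.length_support] at this
  omega

/-- Maximality of `p` against the path `p[0, a) ++ L ++ p[d, c] ++ p[e, n]`, with `p[d, c]`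
traversed backwards. -/
lemma IsLongestPath.add_length_le_of_bypass_reverse (hp : IsLongestPath G p) {L : List V}
    (hL : L.IsChain G.Adj) (hLnd : L.Nodup) (hLp : ∀ z ∈ L, z ∉ p.support) {a c d e : ℕ}
    (hac : a ≤ c) (hcd : c ≤ d) (hde : d < e) (he : e ≤ p.length)
    (hAL : ∀ s ∈ (p.support.take a).getLast?, ∀ u ∈ L.head?, G.Adj s u)
    (hLd : ∀ v ∈ L.getLast?, G.Adj v (p.getVert d)) (hce : G.Adj (p.getVert c) (p.getVert e)) :
    a + L.length + (d + 1 - c) ≤ e := by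
  set seg := (p.support.take (d + 1)).drop c
  have hseg : seg.IsChain G.Adj := (p.isChain_adj_support.take _).drop _
  have hsegl : seg.length = d + 1 - c := by
    simp only [seg, List.length_drop, List.length_take, p.length_support]; omega
  have hhead : seg.head? = some (p.getVert c) := by
    rw [List.head?_drop, List.getElem?_take_of_lt (by omega),
      ← p.getVert_eq_support_getElem? (by omega)]
  have hlast : seg.getLast? = some (p.getVert d) := by
    rw [List.getLast?_drop, if_neg (by simp [p.length_support]; omega),
      getLast?_take_support (by omega)]
  have hsub : (p.support.take a ++ seg ++ p.support.drop e).Sublist p.support := by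
    have h := (((List.take_sublist_take_left (l := p.support) hac).append_right seg).append
      (List.drop_sublist_drop_left p.support (show d + 1 ≤ e by omega)))
    have hsplit : p.support.take c ++ seg ++ p.support.drop (d + 1) = p.support := by
      rw [show p.support.take c = (p.support.take (d + 1)).take c by
        rw [List.take_take, min_eq_left (by omega)], List.take_append_drop, List.take_append_drop]
    rwa [hsplit] at h
  have hperm : (p.support.take a ++ (seg.reverse ++ p.support.drop e)).Perm
      (p.support.take a ++ seg ++ p.support.drop e) := by
    rw [List.append_assoc]
    exact ((List.reverse_perm seg).append_right _).append_left _
  have hB : (seg.reverse ++ p.support.drop e).IsChain G.Adj := by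
    refine List.isChain_append.2 ⟨List.isChain_reverse.2 (hseg.imp fun _ _ h => h.symm),
      p.isChain_adj_support.drop e, ?_⟩
    simp [List.getLast?_reverse, hhead, head?_drop_support he, hce]
  have := hp.length_add_le_of_splice (p.isChain_adj_support.take a) hB
    (hperm.nodup_iff.2 (hp.1.support_nodup.sublist hsub))
    (fun z hz => hsub.subset (hperm.subset hz)) hL hLnd hLp hAL
    (by simpa [List.head?_append, List.head?_reverse, hlast] using hLd)
  simp only [List.length_append, List.length_reverse, hsegl, List.length_take, List.length_drop,
    p.length_support] at this
  omega

end Bypass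

section Lists

variable {G : SimpleGraph V} {H : Set V}

lemma exists_list_of_connected_induce (hH : (G.induce H).Connected) {u v : V} (hu : u ∈ H)
    (hv : v ∈ H) : ∃ L : List V, L.IsChain G.Adj ∧ L.Nodup ∧ (∀ z ∈ L, z ∈ H) ∧
      L.head? = some u ∧ L.getLast? = some v := by
  classical
  obtain ⟨w⟩ := hH.preconnected ⟨u, hu⟩ ⟨v, hv⟩
  let w' : G.Walk u v := w.toPath.1.map (Embedding.induce H).toHom
  have hw' : w'.IsPath := w.toPath.2.map Subtype.val_injective
  refine ⟨w'.support, w'.isChain_adj_support, hw'.support_nodup, ?_,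
    by rw [← Walk.cons_tail_support]; rfl, ?_⟩
  · rintro _ hz
    obtain ⟨z, -, rfl⟩ := List.mem_map.1 (Walk.support_map _ _ ▸ hz)
    exact z.2
  · rw [List.getLast?_eq_some_getLast w'.support_ne_nil, Walk.getLast_support]

lemma ncard_eq_length_of_nodup {L : List V} (hL : L.Nodup) (hLH : ∀ z, z ∈ L ↔ z ∈ H) :
    H.ncard = L.length := by
  classical
  rw [show H = ↑L.toFinset by ext; simp [hLH], Set.ncard_coe_finset,
    List.toFinset_card_of_nodup hL]

lemma exists_list_of_isClique (hH : G.IsClique H) (hfin : H.Finite) {u v : V} (hu : u ∈ H)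
    (hv : v ∈ H) (huv : u = v → H ⊆ {u}) : ∃ L : List V, L.IsChain G.Adj ∧ L.Nodup ∧
      (∀ z, z ∈ L ↔ z ∈ H) ∧ L.head? = some u ∧ L.getLast? = some v := by
  suffices ∃ L : List V, L.Nodup ∧ (∀ z, z ∈ L ↔ z ∈ H) ∧ L.head? = some u ∧
      L.getLast? = some v by
    obtain ⟨L, hnd, hmem, hL⟩ := this
    refine ⟨L, List.Pairwise.isChain (hnd.imp_of_mem fun ha hb hab => ?_), hnd, hmem, hL⟩
    exact hH ((hmem _).1 ha) ((hmem _).1 hb) hab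
  obtain rfl | huv' := eq_or_ne u v
  · refine ⟨[u], List.nodup_singleton u, fun z => ?_, rfl, rfl⟩
    simpa using ⟨fun h => h ▸ hu, fun hz => huv rfl hz⟩
  · classical
    refine ⟨u :: ((hfin.toFinset \ {u, v}).toList ++ [v]), ?_, fun z => ?_, rfl, ?_⟩
    · simp [List.nodup_append, huv', Finset.nodup_toList]
    · by_cases hzu : z = u <;> by_cases hzv : z = v <;> simp_all
    · simp [List.getLast?_cons]

lemma exists_mem_eq_imp_subset_singleton {u : V} (hu : u ∈ H) :
    ∃ v ∈ H, u = v → H ⊆ {u} := by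
  by_cases h : H ⊆ {u}
  · exact ⟨u, hu, fun _ => h⟩
  · obtain ⟨v, hv, hvu⟩ := Set.not_subset.1 h
    exact ⟨v, hv, fun huv => absurd huv.symm hvu⟩

lemma isIndepSet_insert {A : Set V} {u : V} (hA : IsIndepSet G A) (hu : ∀ b ∈ A, ¬ G.Adj u b) :
    IsIndepSet G (insert u A) :=
  Set.pairwise_insert.2 ⟨hA, fun b hb _ => ⟨hu b hb, fun h => hu b hb h.symm⟩⟩

lemma not_connected_induce_of_closed {T C : Set V} (hCT : C ⊆ T) (hC : C.Nonempty)
    (hclosed : ∀ u ∈ C, ∀ v ∈ T, G.Adj u v → v ∈ C) {z : V} (hzT : z ∈ T)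
    (hzC : z ∉ C) :
    ¬ (G.induce T).Connected := by
  intro hconn
  obtain ⟨c, hc⟩ := hC
  have key : ∀ {a b : T} (w : (G.induce T).Walk a b), a.1 ∈ C → b.1 ∈ C := by
    intro a b w
    induction w with
    | nil => exact id
    | cons h _ ih => exact fun ha => ih (hclosed _ ha _ (Subtype.prop _) h)
  obtain ⟨w⟩ := hconn.preconnected ⟨c, hCT hc⟩ ⟨z, hzT⟩
  exact hzC (key w hc)

end Lists

section Runs

variable {G : SimpleGraph V} {x y : V} {p : G.Walk x y} {S : Set V}

def gapStarts (p : G.Walk x y) (S : Set V) : Set ℕ :=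
  {a | a ≤ p.length ∧ p.getVert a ∉ S ∧ (a = 0 ∨ p.getVert (a - 1) ∈ S)}

lemma finite_gapStarts : (gapStarts p S).Finite :=
  (Set.finite_Iic p.length).subset fun _ hr => hr.1

lemma rankAt_eq_of_run {a j : ℕ} (haj : a ≤ j)
    (hrun : ∀ i, a ≤ i → i ≤ j → p.getVert i ∉ S)
    (ha : a = 0 ∨ p.getVert (a - 1) ∈ S) : rankAt G p S j = j - a := by
  have hR :
      {r : ℕ | ∃ c : ℕ, c + r = j ∧ ∀ i, c ≤ i → i ≤ j → p.getVert i ∉ S} =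
      Set.Iic (j - a) := by
    ext r
    refine ⟨fun ⟨c, hc, hcrun⟩ => ?_, fun hr => ⟨j - r, by simp at hr; omega,
      fun i hi hij => hrun i (by simp at hr; omega) hij⟩⟩
    rcases ha with rfl | ha
    · simp; omega
    · by_contra hr
      exact hcrun (a - 1) (by simp at hr; omega) (by omega) ha
  rw [rankAt, hR, csSup_Iic]

lemma rankAt_eq_zero_of_mem_gapStarts {r : ℕ} (hr : r ∈ gapStarts p S) :
    rankAt G p S r = 0 := by
  simpa using rankAt_eq_of_run le_rfl (fun i h1 h2 => le_antisymm h2 h1 ▸ hr.2.1) hr.2.2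

lemma lt_or_lt_of_mem_gapStarts {a j r : ℕ}
    (hrun : ∀ m, a ≤ m → m ≤ j → p.getVert m ∉ S) (hr : r ∈ gapStarts p S)
    (hra : r ≠ a) : r < a ∨ j < r := by
  by_contra! h
  obtain ⟨-, -, hr0 | hrS⟩ := hr
  · omega
  · exact hrun (r - 1) (by omega) (by omega) hrS

lemma exists_run_start_s10 {j : ℕ} (hj : p.getVert j ∉ S) : ∃ a ≤ j,
    (∀ i, a ≤ i → i ≤ j → p.getVert i ∉ S) ∧ (a = 0 ∨ p.getVert (a - 1) ∈ S) := by
  induction j with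
  | zero => exact ⟨0, le_rfl, fun i _ hi => by rwa [Nat.le_zero.1 hi], Or.inl rfl⟩
  | succ j ih =>
    by_cases hjS : p.getVert j ∈ S
    · exact ⟨j + 1, le_rfl, fun i h1 h2 => by rwa [le_antisymm h2 h1], Or.inr hjS⟩
    · obtain ⟨a, haj, hrun, ha⟩ := ih hjS
      refine ⟨a, by omega, fun i h1 h2 => ?_, ha⟩
      rcases Nat.lt_or_ge i (j + 1) with h | h
      · exact hrun i h1 (by omega)
      · rwa [le_antisymm h2 h]

lemma exists_isGapInterval {a : ℕ} (ha : a ∈ gapStarts p S) :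
    ∃ b, IsGapInterval G p S a b := by
  obtain ⟨han, haS, hleft⟩ := ha
  classical
  have hex : ∃ d, a + d = p.length ∨ p.getVert (a + d + 1) ∈ S := ⟨p.length - a, by omega⟩
  have hmin : Nat.find hex ≤ p.length - a := Nat.find_min' hex (Or.inl (by omega))
  refine ⟨a + Nat.find hex, by omega, by omega, fun i h1 h2 => ?_, hleft, Nat.find_spec hex⟩
  obtain rfl | h1 := h1.eq_or_lt
  · exact haS
  · have := Nat.find_min hex (show i - 1 - a < Nat.find hex by omega)
    rw [show a + (i - 1 - a) + 1 = i by omega] at this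
    exact fun hi => this (Or.inr hi)

lemma IsGapInterval.right_le {a b b' : ℕ} (h : IsGapInterval G p S a b)
    (h' : IsGapInterval G p S a b') : b ≤ b' := by
  by_contra! hlt
  rcases h'.2.2.2.2 with rfl | hS
  · exact absurd h.2.1 (by omega)
  · exact h.2.2.1 (b' + 1) (by have := h'.1; omega) (by omega) hS

lemma ncard_gapIntervals :
    {ab : ℕ × ℕ | IsGapInterval G p S ab.1 ab.2}.ncard = (gapStarts p S).ncard := by
  have himage : Prod.fst '' {ab : ℕ × ℕ | IsGapInterval G p S ab.1 ab.2} = gapStarts p S := by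
    ext a
    refine ⟨?_, fun ha => ?_⟩
    · rintro ⟨⟨a, b⟩, ⟨hab, hbn, hrun, hleft, -⟩, rfl⟩
      exact ⟨by omega, hrun a le_rfl hab, hleft⟩
    · obtain ⟨b, hb⟩ := exists_isGapInterval ha
      exact ⟨(a, b), hb, rfl⟩
  rw [← himage, Set.InjOn.ncard_image]
  rintro ⟨a, b⟩ h ⟨a', b'⟩ h' (rfl : a = a')
  exact Prod.ext rfl (le_antisymm (IsGapInterval.right_le h h') (IsGapInterval.right_le h' h))

end Runs

section Component

variable {G : SimpleGraph V} {x y : V} {p : G.Walk x y} {H : Set V}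

lemma IsCompOutside.notMem_support (hH : IsCompOutside G {v | v ∈ p.support} H) {u : V}
    (hu : u ∈ H) : u ∉ p.support :=
  Set.disjoint_left.1 hH.2.1 hu

lemma getVert_zero_notMem_attachSet (hp : IsLongestPath G p)
    (hH : IsCompOutside G {v | v ∈ p.support} H) : p.getVert 0 ∉ attachSet G p H := by
  rintro ⟨-, u, hu, hadj⟩
  have := hp.add_length_le_of_bypass (List.isChain_singleton u) (List.nodup_singleton u)
    (by simpa using hH.notMem_support hu) le_rfl (Nat.zero_le _) (by simp)
    (by rw [head?_drop_support (Nat.zero_le _)]; simpa using hadj)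
  simp at this

lemma getVert_length_notMem_attachSet (hp : IsLongestPath G p)
    (hH : IsCompOutside G {v | v ∈ p.support} H) : p.getVert p.length ∉ attachSet G p H := by
  rintro ⟨-, u, hu, hadj⟩
  have := hp.add_length_le_of_bypass (List.isChain_singleton u) (List.nodup_singleton u)
    (by simpa using hH.notMem_support hu) le_rfl le_rfl
    (by simpa [getLast?_take_support le_rfl] using hadj.symm) (by simp)
  simp at this

lemma getVert_succ_notMem_attachSet (hp : IsLongestPath G p)
    (hH : IsCompOutside G {v | v ∈ p.support} H) {m : ℕ} (hm : m < p.length)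
    (hmS : p.getVert m ∈ attachSet G p H) : p.getVert (m + 1) ∉ attachSet G p H := by
  rintro ⟨-, u', hu', hadj'⟩
  obtain ⟨-, u, hu, hadj⟩ := hmS
  obtain ⟨L, hL, hLnd, hLH, hhead, hlast⟩ := exists_list_of_connected_induce hH.2.2.1 hu hu'
  have := hp.add_length_le_of_bypass (a := m + 1) (e := m + 1) hL hLnd
    (fun z hz => hH.notMem_support (hLH z hz)) le_rfl (by omega)
    (by simpa [getLast?_take_support hm.le, hhead] using hadj.symm)
    (by simpa [head?_drop_support hm, hlast] using hadj')
  have : L ≠ [] := by rintro rfl; simp at hhead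
  have := List.length_pos_iff.2 this
  omega

lemma exists_mem_adj_getLast?_take (hH : IsCompOutside G {v | v ∈ p.support} H) {r : ℕ}
    (hr : r ∈ gapStarts p (attachSet G p H)) :
    ∃ u ∈ H, ∀ s ∈ (p.support.take r).getLast?, G.Adj s u := by
  obtain ⟨hrn, -, rfl | ⟨-, u, hu, hadj⟩⟩ := hr
  · obtain ⟨u, hu⟩ := hH.1
    exact ⟨u, hu, by simp⟩
  · refine ⟨u, hu, ?_⟩
    rcases r with _ | r
    · simp
    · simpa [getLast?_take_support (show r ≤ p.length by omega)] using hadj.symm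

lemma not_adj_getVert_gapStarts (hp : IsLongestPath G p)
    (hH : IsCompOutside G {v | v ∈ p.support} H) {r r' : ℕ}
    (hr : r ∈ gapStarts p (attachSet G p H)) (hr' : r' ∈ gapStarts p (attachSet G p H))
    (hlt : r < r') : ¬ G.Adj (p.getVert r) (p.getVert r') := by
  intro hadj
  obtain ⟨hr'n, -, hr'S | ⟨-, v, hv, hvadj⟩⟩ := hr'
  · omega
  obtain ⟨u, hu, hru⟩ := exists_mem_adj_getLast?_take hH hr
  obtain ⟨L, hL, hLnd, hLH, hhead, hlast⟩ := exists_list_of_connected_induce hH.2.2.1 hu hv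
  have := hp.add_length_le_of_bypass_reverse (c := r) (d := r' - 1) hL hLnd
    (fun z hz => hH.notMem_support (hLH z hz)) le_rfl (by omega) (by omega) hr'n
    (by simpa [hhead] using hru) (by simpa [hlast] using hvadj) hadj
  have : L ≠ [] := by rintro rfl; simp at hhead
  have := List.length_pos_iff.2 this
  omega

lemma ncard_gapStarts_attachSet (hp : IsLongestPath G p)
    (hH : IsCompOutside G {v | v ∈ p.support} H) :
    (gapStarts p (attachSet G p H)).ncard = (attachSet G p H).ncard + 1 := by
  set S := attachSet G p H
  have h0 : 0 ∈ gapStarts p S :=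
    ⟨Nat.zero_le _, getVert_zero_notMem_attachSet hp hH, Or.inl rfl⟩
  have himage : (fun r => p.getVert (r - 1)) '' (gapStarts p S \ {0}) = S := by
    ext s
    refine ⟨?_, fun hs => ?_⟩
    · rintro ⟨r, ⟨⟨-, -, hr | hr⟩, hr0⟩, rfl⟩
      exacts [absurd hr hr0, hr]
    · obtain ⟨m, rfl, hm⟩ := Walk.mem_support_iff_exists_getVert.1 hs.1
      have hmn : m < p.length := lt_of_le_of_ne hm fun h =>
        getVert_length_notMem_attachSet hp hH (h ▸ hs)
      have hm1 : m + 1 ∈ gapStarts p S :=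
        ⟨hmn, getVert_succ_notMem_attachSet hp hH hmn hs, Or.inr hs⟩
      exact ⟨m + 1, ⟨hm1, by simp⟩, rfl⟩
  have hinj : Set.InjOn (fun r => p.getVert (r - 1)) (gapStarts p S \ {0}) := by
    rintro r ⟨⟨hrn, -⟩, hr0⟩ r' ⟨⟨hr'n, -⟩, hr'0⟩ h
    have := hp.1.getVert_injOn (show r - 1 ≤ p.length by omega)
      (show r' - 1 ≤ p.length by omega) h
    simp only [Set.mem_singleton_iff] at hr0 hr'0
    omega
  rw [← Set.ncard_sdiff_singleton_add_one h0 finite_gapStarts, ← hinj.ncard_image, himage]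

lemma isIndepSet_union_getVert_gapStarts (hp : IsLongestPath G p)
    (hH : IsCompOutside G {v | v ∈ p.support} H) {I : Set V} (hIH : I ⊆ H)
    (hI : IsIndepSet G I) : IsIndepSet G (I ∪ p.getVert '' gapStarts p (attachSet G p H)) := by
  have hIR : ∀ u ∈ I, ∀ r ∈ gapStarts p (attachSet G p H), ¬ G.Adj u (p.getVert r) :=
    fun u hu r hr hadj => hr.2.1 ⟨Walk.getVert_mem_support p r, u, hIH hu, hadj⟩
  refine Set.pairwise_union.2 ⟨hI, ?_, ?_⟩
  · rintro _ ⟨r, hr, rfl⟩ _ ⟨r', hr', rfl⟩ hne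
    rcases lt_trichotomy r r' with h | rfl | h
    · exact not_adj_getVert_gapStarts hp hH hr hr' h
    · exact absurd rfl hne
    · exact fun hadj => not_adj_getVert_gapStarts hp hH hr' hr h hadj.symm
  · rintro u hu _ ⟨r, hr, rfl⟩ -
    exact ⟨hIR u hu r hr, fun hadj => hIR u hu r hr hadj.symm⟩

lemma ncard_image_getVert (hp : p.IsPath) {A : Set ℕ} (hA : A ⊆ {i | i ≤ p.length}) :
    (p.getVert '' A).ncard = A.ncard :=
  (hp.getVert_injOn.mono hA).ncard_image

lemma ncard_add_ncard_attachSet_le {k : ℕ}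
    (halpha : ∀ A : Set V, IsIndepSet G A → A.ncard ≤ k + 2)
    (hp : IsLongestPath G p) (hH : IsCompOutside G {v | v ∈ p.support} H) {I : Set V}
    (hIfin : I.Finite) (hIH : I ⊆ H) (hI : IsIndepSet G I) :
    I.ncard + (attachSet G p H).ncard + 1 ≤ k + 2 := by
  have hdisj : Disjoint I (p.getVert '' gapStarts p (attachSet G p H)) := by
    refine Set.disjoint_left.2 fun u hu ⟨r, _, hr⟩ => ?_
    exact hH.notMem_support (hIH hu) (hr ▸ p.getVert_mem_support r)
  have := halpha _ (isIndepSet_union_getVert_gapStarts hp hH hIH hI)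
  rwa [Set.ncard_union_eq hdisj hIfin (finite_gapStarts.image _),
    ncard_image_getVert hp.1 fun _ hr => hr.1, ncard_gapStarts_attachSet hp hH,
    ← add_assoc] at this

lemma ncard_attachSet_le {k : ℕ} (halpha : ∀ A : Set V, IsIndepSet G A → A.ncard ≤ k + 2)
    (hp : IsLongestPath G p) (hH : IsCompOutside G {v | v ∈ p.support} H) :
    (attachSet G p H).ncard ≤ k := by
  obtain ⟨h, hh⟩ := hH.1
  have := ncard_add_ncard_attachSet_le halpha hp hH (Set.finite_singleton h)
    (Set.singleton_subset_iff.2 hh) (Set.pairwise_singleton _ _)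
  rw [Set.ncard_singleton] at this
  omega

lemma le_ncard_attachSet [Fintype V] {k : ℕ} (hconn : IsKConnected k G)
    (hp : IsLongestPath G p) (hH : IsCompOutside G {v | v ∈ p.support} H) :
    k ≤ (attachSet G p H).ncard := by
  by_contra! hlt
  refine not_connected_induce_of_closed (T := (attachSet G p H)ᶜ)
    (fun u hu hS => hH.notMem_support hu hS.1) hH.1
    (fun u hu v hv hadj => ?_) (getVert_zero_notMem_attachSet hp hH)
    (fun h => hH.notMem_support h (p.getVert_mem_support 0)) (hconn.2 _ hlt)
  by_cases hvp : v ∈ p.support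
  · exact absurd ⟨hvp, u, hu, hadj⟩ hv
  · exact hH.2.2.2 u hu v hadj hvp

lemma ncard_attachSet [Fintype V] {k : ℕ} (hconn : IsKConnected k G)
    (halpha : ∀ A : Set V, IsIndepSet G A → A.ncard ≤ k + 2)
    (hp : IsLongestPath G p) (hH : IsCompOutside G {v | v ∈ p.support} H) :
    (attachSet G p H).ncard = k :=
  (ncard_attachSet_le halpha hp hH).antisymm (le_ncard_attachSet hconn hp hH)

lemma isClique_of_isLongestPath [Fintype V] {k : ℕ} (hconn : IsKConnected k G)
    (halpha : ∀ A : Set V, IsIndepSet G A → A.ncard ≤ k + 2)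
    (hp : IsLongestPath G p) (hH : IsCompOutside G {v | v ∈ p.support} H) : G.IsClique H := by
  intro u hu v hv huv
  by_contra hadj
  have := ncard_add_ncard_attachSet_le halpha hp hH (Set.toFinite {u, v})
    (Set.insert_subset hu (Set.singleton_subset_iff.2 hv))
    (Set.pairwise_pair.2 fun _ => ⟨hadj, fun h => hadj h.symm⟩)
  rw [Set.ncard_pair huv, ncard_attachSet hconn halpha hp hH] at this
  omega

end Component

section Hamiltonian

variable [Fintype V] {G : SimpleGraph V} {k : ℕ} {x y : V} {p : G.Walk x y} {H : Set V}

lemma exists_adj_adj_of_ne (hconn : IsKConnected k G)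
    (halpha : ∀ A : Set V, IsIndepSet G A → A.ncard ≤ k + 2)
    (hp : IsLongestPath G p) (hH : IsCompOutside G {v | v ∈ p.support} H) {s t : V}
    (hs : s ∈ attachSet G p H) (ht : t ∈ attachSet G p H) (hst : s ≠ t) :
    ∃ u ∈ H, ∃ v ∈ H, G.Adj s u ∧ G.Adj t v ∧ (u = v → H ⊆ {u}) := by
  obtain ⟨-, u, hu, hus⟩ := id hs
  obtain ⟨-, v, hv, hvt⟩ := id ht
  by_contra! hno
  obtain ⟨rfl, hHu⟩ := hno u hu v hv hus.symm hvt.symm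
  -- `u` is the only neighbour of `s` and `t` in `H`, so `u` and the other `k - 2` attachment
  -- points separate `H - u` from `x`
  have hsu : ∀ w ∈ H, G.Adj w s → w = u := fun w hw h => (hno w hw u hu h.symm hvt.symm).1
  have htu : ∀ w ∈ H, G.Adj w t → w = u :=
    fun w hw h => (hno u hu w hw hus.symm h.symm).1.symm
  set W := insert u (attachSet G p H \ {s, t})
  have hWk : W.ncard < k := by
    have hst2 : ({s, t} : Set V).ncard = 2 := Set.ncard_pair hst
    have hsub : {s, t} ⊆ attachSet G p H := Set.insert_subset hs (Set.singleton_subset_iff.2 ht)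
    have h2 := Set.ncard_le_ncard hsub
    have : W.ncard ≤ (attachSet G p H \ {s, t}).ncard + 1 := Set.ncard_insert_le _ _
    rw [Set.ncard_sdiff hsub, hst2] at this
    rw [hst2] at h2
    rw [ncard_attachSet hconn halpha hp hH] at this h2
    omega
  refine not_connected_induce_of_closed (T := Wᶜ) (C := H \ {u}) ?_ (Set.sdiff_nonempty.2 hHu)
    ?_ (z := p.getVert 0) ?_ (fun h => hH.notMem_support h.1 (p.getVert_mem_support 0))
    (hconn.2 W hWk)
  · rintro w ⟨hw, hwu⟩ (rfl | hwS)
    · exact hwu rfl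
    · exact hH.notMem_support hw hwS.1.1
  · rintro w ⟨hw, hwu⟩ z hzW hadj
    by_cases hzp : z ∈ p.support
    · have hzS : z ∈ attachSet G p H := ⟨hzp, w, hw, hadj⟩
      have : z = s ∨ z = t := by
        by_contra! h
        exact hzW (Or.inr ⟨hzS, by simp [h.1, h.2]⟩)
      rcases this with rfl | rfl
      exacts [absurd (hsu w hw hadj) hwu, absurd (htu w hw hadj) hwu]
    · exact ⟨hH.2.2.2 w hw z hadj hzp, fun hzu => hzW (Or.inl hzu)⟩
  · rintro (h | h)
    · exact hH.notMem_support (h ▸ hu) (p.getVert_mem_support 0)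
    · exact getVert_zero_notMem_attachSet hp hH h.1

lemma exists_hamiltonian_list (hconn : IsKConnected k G)
    (halpha : ∀ A : Set V, IsIndepSet G A → A.ncard ≤ k + 2)
    (hp : IsLongestPath G p) (hH : IsCompOutside G {v | v ∈ p.support} H) {os ot : Option V}
    (hos : ∀ s ∈ os, s ∈ attachSet G p H) (hot : ∀ t ∈ ot, t ∈ attachSet G p H)
    (hst : ∀ s ∈ os, ∀ t ∈ ot, s ≠ t) :
    ∃ L : List V, L.IsChain G.Adj ∧ L.Nodup ∧ (∀ z, z ∈ L ↔ z ∈ H) ∧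
      (∀ s ∈ os, ∀ u ∈ L.head?, G.Adj s u) ∧
      (∀ v ∈ L.getLast?, ∀ t ∈ ot, G.Adj v t) := by
  obtain ⟨u, hu, v, hv, huv, hsu, hvt⟩ : ∃ u ∈ H, ∃ v ∈ H, (u = v → H ⊆ {u}) ∧
      (∀ s ∈ os, G.Adj s u) ∧ (∀ t ∈ ot, G.Adj v t) := by
    rcases os with _ | s <;> rcases ot with _ | t
    · obtain ⟨u, hu⟩ := hH.1
      obtain ⟨v, hv, huv⟩ := exists_mem_eq_imp_subset_singleton hu
      exact ⟨u, hu, v, hv, huv, by simp, by simp⟩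
    · obtain ⟨-, v, hv, hvt⟩ := hot t rfl
      obtain ⟨u, hu, hvu⟩ := exists_mem_eq_imp_subset_singleton hv
      exact ⟨u, hu, v, hv, fun h => by subst h; exact hvu rfl, by simp, by simpa using hvt⟩
    · obtain ⟨-, u, hu, hus⟩ := hos s rfl
      obtain ⟨v, hv, huv⟩ := exists_mem_eq_imp_subset_singleton hu
      exact ⟨u, hu, v, hv, huv, by simpa using hus.symm, by simp⟩
    · obtain ⟨u, hu, v, hv, hsu, htv, huv⟩ :=
        exists_adj_adj_of_ne hconn halpha hp hH (hos s rfl) (hot t rfl) (hst s rfl t rfl)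
      exact ⟨u, hu, v, hv, huv, by simpa using hsu, by simpa using htv.symm⟩
  obtain ⟨L, hL, hnd, hmem, hhead, hlast⟩ :=
    exists_list_of_isClique (isClique_of_isLongestPath hconn halpha hp hH) (Set.toFinite H)
      hu hv huv
  exact ⟨L, hL, hnd, hmem, by simpa [hhead] using hsu, by simpa [hlast] using hvt⟩

end Hamiltonian

section Gaps

variable [Fintype V] {G : SimpleGraph V} {k : ℕ} {x y : V} {p : G.Walk x y} {H : Set V}

lemma ncard_le_of_isGapInterval (hconn : IsKConnected k G)
    (halpha : ∀ A : Set V, IsIndepSet G A → A.ncard ≤ k + 2)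
    (hp : IsLongestPath G p) (hH : IsCompOutside G {v | v ∈ p.support} H) {a b : ℕ}
    (hgap : IsGapInterval G p (attachSet G p H) a b) : H.ncard ≤ b - a + 1 := by
  obtain ⟨hab, hbn, -, hleft, hright⟩ := hgap
  obtain ⟨L, hL, hnd, hmem, hAL, hLB⟩ := exists_hamiltonian_list hconn halpha hp hH
    (os := (p.support.take a).getLast?) (ot := (p.support.drop (b + 1)).head?)
    (fun s hs => by
      obtain ⟨ha, rfl⟩ := (mem_getLast?_take_support (by omega)).1 hs
      exact hleft.resolve_left (by omega))
    (fun t ht => by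
      obtain ⟨hb, rfl⟩ := mem_head?_drop_support.1 ht
      exact hright.resolve_left (by omega))
    (fun s hs t ht hst => by
      obtain ⟨ha, rfl⟩ := (mem_getLast?_take_support (by omega)).1 hs
      obtain ⟨hb, rfl⟩ := mem_head?_drop_support.1 ht
      have := hp.1.getVert_injOn (show a - 1 ≤ p.length by omega) hb hst
      omega)
  have := hp.add_length_le_of_bypass hL hnd (fun z hz => hH.notMem_support ((hmem z).1 hz))
    (show a ≤ b + 1 by omega) (by omega) hAL hLB
  rw [← ncard_eq_length_of_nodup hnd hmem] at this
  omega

lemma not_adj_of_rankAt_add_lt (hconn : IsKConnected k G)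
    (halpha : ∀ A : Set V, IsIndepSet G A → A.ncard ≤ k + 2)
    (hp : IsLongestPath G p) (hH : IsCompOutside G {v | v ∈ p.support} H) {i j : ℕ}
    (hjn : j ≤ p.length) (hi : p.getVert i ∉ attachSet G p H)
    (hj : p.getVert j ∉ attachSet G p H)
    (hm : ∃ m, i < m ∧ m < j ∧ p.getVert m ∈ attachSet G p H)
    (hrank : rankAt G p (attachSet G p H) i + rankAt G p (attachSet G p H) j < H.ncard) :
    ¬ G.Adj (p.getVert i) (p.getVert j) := by
  intro hadj
  obtain ⟨a, hai, hruni, hlefti⟩ := exists_run_start_s10 hi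
  obtain ⟨a', haj, hrunj, hleftj⟩ := exists_run_start_s10 hj
  rw [rankAt_eq_of_run hai hruni hlefti, rankAt_eq_of_run haj hrunj hleftj] at hrank
  obtain ⟨m, him, hmj, hmS⟩ := hm
  have hma : m < a' := by
    by_contra! h
    exact hrunj m h hmj.le hmS
  -- the longer path: `p[0, a - 1]`, all of `H`, `p[a' - 1]` back down to `p[i]`, then `p[j, n]`
  obtain ⟨L, hL, hnd, hmem, hAL, hLd⟩ := exists_hamiltonian_list hconn halpha hp hH
    (os := (p.support.take a).getLast?) (ot := some (p.getVert (a' - 1)))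
    (fun s hs => by
      obtain ⟨ha, rfl⟩ := (mem_getLast?_take_support (by omega)).1 hs
      exact hlefti.resolve_left (by omega))
    (fun t ht => by
      rw [Option.mem_some_iff] at ht
      exact ht ▸ hleftj.resolve_left (by omega))
    (fun s hs t ht hst => by
      obtain ⟨ha, rfl⟩ := (mem_getLast?_take_support (by omega)).1 hs
      rw [Option.mem_some_iff] at ht
      subst ht
      have := hp.1.getVert_injOn (show a - 1 ≤ p.length by omega)
        (show a' - 1 ≤ p.length by omega) hst
      omega)
  have := hp.add_length_le_of_bypass_reverse (c := i) (d := a' - 1) hL hnd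
    (fun z hz => hH.notMem_support ((hmem z).1 hz)) hai (by omega) (by omega) hjn hAL
    (fun v hv => hLd v hv _ rfl) hadj
  rw [← ncard_eq_length_of_nodup hnd hmem] at this
  omega

lemma not_adj_getVert_gapStarts_of_rankAt_lt (hconn : IsKConnected k G)
    (halpha : ∀ A : Set V, IsIndepSet G A → A.ncard ≤ k + 2)
    (hp : IsLongestPath G p) (hH : IsCompOutside G {v | v ∈ p.support} H) {a i r : ℕ}
    (ha : a = 0 ∨ p.getVert (a - 1) ∈ attachSet G p H) (hai : a ≤ i) (hin : i ≤ p.length)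
    (hrun : ∀ m, a ≤ m → m ≤ i → p.getVert m ∉ attachSet G p H)
    (hr : r ∈ gapStarts p (attachSet G p H)) (hra : r ≠ a)
    (hrank : rankAt G p (attachSet G p H) i < H.ncard) :
    ¬ G.Adj (p.getVert i) (p.getVert r) := by
  have hr0 := rankAt_eq_zero_of_mem_gapStarts hr
  have hi := hrun i hai le_rfl
  rcases lt_or_lt_of_mem_gapStarts hrun hr hra with h | h
  · have haS := ha.resolve_left (by omega)
    have : r ≠ a - 1 := fun h => hr.2.1 (h ▸ haS)
    exact fun hadj => not_adj_of_rankAt_add_lt hconn halpha hp hH hin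
      hr.2.1 hi ⟨a - 1, by omega, by omega, haS⟩ (by omega) hadj.symm
  · obtain ⟨hrn, hrS, hr0' | hrS'⟩ := hr
    · omega
    · have : r - 1 ≠ i := fun h => hi (h ▸ hrS')
      exact not_adj_of_rankAt_add_lt hconn halpha hp hH hrn hi hrS
        ⟨r - 1, by omega, by omega, hrS'⟩ (by omega)

lemma adj_of_rankAt_lt (hconn : IsKConnected k G)
    (halpha : ∀ A : Set V, IsIndepSet G A → A.ncard ≤ k + 2)
    (hp : IsLongestPath G p) (hH : IsCompOutside G {v | v ∈ p.support} H) {i j : ℕ}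
    (hij : i < j) (hjn : j ≤ p.length)
    (hrun : ∀ m, i ≤ m → m ≤ j → p.getVert m ∉ attachSet G p H)
    (hri : rankAt G p (attachSet G p H) i < H.ncard)
    (hrj : rankAt G p (attachSet G p H) j < H.ncard) : G.Adj (p.getVert i) (p.getVert j) := by
  set S := attachSet G p H
  by_contra hadj
  obtain ⟨u, hu⟩ := hH.1
  obtain ⟨a, hai, hruni, ha⟩ := exists_run_start_s10 (hrun i le_rfl hij.le)
  have hrunj : ∀ m, a ≤ m → m ≤ j → p.getVert m ∉ S := fun m h1 h2 =>
    (le_total m i).elim (hruni m h1) fun h => hrun m h h2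
  set R := gapStarts p S \ {a}
  have haR : a ∈ gapStarts p S := ⟨by omega, hruni a le_rfl hai, ha⟩
  have hR : R.ncard = k := by
    rw [Set.ncard_sdiff_singleton_of_mem haR,
      ncard_gapStarts_attachSet hp hH, ncard_attachSet hconn halpha hp hH, Nat.add_sub_cancel]
  -- replacing the start `p[a]` of the run by `p[i]` and `p[j]` gives `k + 3` independent vertices
  have hnotR : ∀ l, a ≤ l → l ≤ j → p.getVert l ∉ p.getVert '' R := by
    rintro l h1 h2 ⟨r, hr, hrl⟩
    have := hp.1.getVert_injOn hr.1.1 (show l ≤ p.length by omega) hrl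
    rcases lt_or_lt_of_mem_gapStarts hrunj hr.1 hr.2 with h | h <;> omega
  have hnadj : ∀ l, a ≤ l → l ≤ j → rankAt G p S l < H.ncard →
      ∀ b ∈ insert u (p.getVert '' R), ¬ G.Adj (p.getVert l) b := by
    rintro l h1 h2 hl b (rfl | ⟨r, hr, rfl⟩) hadj
    · exact hrunj l h1 h2 ⟨p.getVert_mem_support l, b, hu, hadj.symm⟩
    · exact not_adj_getVert_gapStarts_of_rankAt_lt hconn halpha hp hH ha h1 (by omega)
        (fun m h1 h2' => hrunj m h1 (by omega)) hr.1 hr.2 hl hadj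
  have hI : IsIndepSet G
      (insert (p.getVert i) (insert (p.getVert j) (insert u (p.getVert '' R)))) := by
    refine isIndepSet_insert (isIndepSet_insert ?_ (hnadj j (by omega) le_rfl hrj)) ?_
    · refine (isIndepSet_union_getVert_gapStarts hp hH (Set.singleton_subset_iff.2 hu)
        (Set.pairwise_singleton u _)).mono ?_
      rw [Set.insert_eq]
      exact Set.union_subset_union_right _ (Set.image_mono Set.sdiff_subset)
    · rintro b (rfl | hb)
      exacts [hadj, hnadj i hai hij.le hri b hb]
  have huR : u ∉ p.getVert '' R := by
    rintro ⟨r, -, hr⟩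
    exact hH.notMem_support hu (hr ▸ p.getVert_mem_support r)
  have hjI : p.getVert j ∉ insert u (p.getVert '' R) := by
    rintro (hju | hj)
    · exact hH.notMem_support hu (hju ▸ p.getVert_mem_support j)
    · exact hnotR j (by omega) le_rfl hj
  have hiI : p.getVert i ∉ insert (p.getVert j) (insert u (p.getVert '' R)) := by
    rintro (hij' | hiI)
    · have := hp.1.getVert_injOn (show i ≤ p.length by omega) hjn hij'
      omega
    rcases hiI with hiu | hi
    · exact hH.notMem_support hu (hiu ▸ p.getVert_mem_support i)
    · exact hnotR i hai hij.le hi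
  have := halpha _ hI
  rw [Set.ncard_insert_of_notMem hiI, Set.ncard_insert_of_notMem hjI,
    Set.ncard_insert_of_notMem huR,
    ncard_image_getVert hp.1 fun r hr => hr.1.1, hR] at this
  omega

end Gaps

/-- structure of a component `H` of `G - V(p)` for a longest path `p` in a
`k`-connected graph `G` with `α(G) ≤ k + 2`: (1) `H` has exactly `k` attachment points;
(2) `H` is complete; (3) `P - S` has exactly `k + 1` components, each with at least `|V(H)|`
vertices; (4) vertices in distinct components of `P - S` with rank sum `< |V(H)|` are
non-adjacent; (5) the vertices of rank `< |V(H)|` in a component of `P - S` form a clique. -/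
theorem stmt10 [Fintype V] (G : SimpleGraph V) (k : ℕ) (hconn : IsKConnected k G)
    (halpha : ∀ A : Set V, IsIndepSet G A → A.ncard ≤ k + 2)
    {x y : V} (p : G.Walk x y) (hp : IsLongestPath G p)
    (H : Set V) (hH : IsCompOutside G {v | v ∈ p.support} H) :
    (attachSet G p H).ncard = k ∧
    G.IsClique H ∧
    ({ab : ℕ × ℕ | IsGapInterval G p (attachSet G p H) ab.1 ab.2}.ncard = k + 1 ∧
      ∀ a b : ℕ, IsGapInterval G p (attachSet G p H) a b → H.ncard ≤ b - a + 1) ∧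
    (∀ i j : ℕ, i < j → j ≤ p.length →
      p.getVert i ∉ attachSet G p H → p.getVert j ∉ attachSet G p H →
      (∃ m, i < m ∧ m < j ∧ p.getVert m ∈ attachSet G p H) →
      rankAt G p (attachSet G p H) i + rankAt G p (attachSet G p H) j < H.ncard →
      ¬ G.Adj (p.getVert i) (p.getVert j)) ∧
    (∀ i j : ℕ, i < j → j ≤ p.length →
      (∀ m, i ≤ m → m ≤ j → p.getVert m ∉ attachSet G p H) →
      rankAt G p (attachSet G p H) i < H.ncard →
      rankAt G p (attachSet G p H) j < H.ncard →
      G.Adj (p.getVert i) (p.getVert j)) := by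
  have hS := ncard_attachSet hconn halpha hp hH
  refine ⟨hS, isClique_of_isLongestPath hconn halpha hp hH,
    ⟨?_, fun a b => ncard_le_of_isGapInterval hconn halpha hp hH⟩,
    fun i j _ hjn hi hj hm hrank => not_adj_of_rankAt_add_lt hconn halpha hp hH hjn hi hj hm hrank,
    fun i j hij hjn hrun => adj_of_rankAt_lt hconn halpha hp hH hij hjn hrun⟩
  rw [ncard_gapIntervals, ncard_gapStarts_attachSet hp hH, hS]

end GallaiFormal
end
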